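/- arXiv:2001.06353 — 8 statements merged into one kernel-verified Lean document; each statement's English description precedes it below -/
import Mathlib

section
/- Let f : ℂ → ℂ be a nonconstant entire function and let t ≥ 0. Then the following are equivalent: (i) Z(t,f,w) → 0 as w → ∞ (i.e., for every ε > 0 there is S > 0 such that Z(t,f,w) < ε whenever |w| ≥ S); (ii) Z(t,λ·f,w) → 0 as λ → 0 uniformly in w over |w| > 1 (i.e., for every ε > 0 there is δ > 0 such that Z(t,λ·f,w) < ε for all λ ∈ ℂ with 0 < |λ| < δ and all w ∈ ℂ with |w| > 1). -/
open Filter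

/-- Cylindrical partition function `Z(t, g, w)`. -/
noncomputable def cylZ (t : ℝ) (g : ℂ → ℂ) (w : ℂ) : ENNReal :=
  ∑' z : {z : ℂ // g z = w},
    ENNReal.ofReal (‖w‖ / (‖z.1‖ * ‖deriv g z.1‖)) ^ t

lemma cylZ_const_mul (t : ℝ) (f : ℂ → ℂ) (hf : Differentiable ℂ f) (lam : ℂ)
    (hl : lam ≠ 0) (w : ℂ) :
    cylZ t (fun z => lam * f z) w = cylZ t f (w / lam) := by
  have hiff : ∀ z : ℂ, f z = w / lam ↔ lam * f z = w := fun z => by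
    rw [eq_div_iff hl, mul_comm]
  set e := Equiv.subtypeEquivRight hiff with he
  rw [cylZ, cylZ, ← Equiv.tsum_eq e]
  refine tsum_congr fun z => ?_
  have hd : deriv (fun z => lam * f z) z.1 = lam * deriv f z.1 :=
    deriv_const_mul lam (hf z.1)
  obtain ⟨z, hz⟩ := z
  have hval : ((e ⟨z, hz⟩ : {z : ℂ // lam * f z = w}) : ℂ) = z := by
    rw [he, Equiv.subtypeEquivRight_apply]
  have hla : ‖lam‖ ≠ 0 := by simpa using hl
  rw [hval, hd, norm_mul, norm_div, div_div]
  congr 2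
  ring

theorem stmt0 (f : ℂ → ℂ) (hf : Differentiable ℂ f) (hnc : ∀ c : ℂ, f ≠ fun _ => c)
    (t : ℝ) (ht : 0 ≤ t) :
    ((∀ ε : ENNReal, 0 < ε → ∃ S : ℝ, 0 < S ∧
        ∀ w : ℂ, S ≤ ‖w‖ → cylZ t f w < ε) ↔
      (∀ ε : ENNReal, 0 < ε → ∃ δ : ℝ, 0 < δ ∧
        ∀ lam : ℂ, 0 < ‖lam‖ → ‖lam‖ < δ →
          ∀ w : ℂ, 1 < ‖w‖ → cylZ t (fun z => lam * f z) w < ε)) := by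
  constructor
  · intro h ε hε
    obtain ⟨S, hS, hSP⟩ := h ε hε
    refine ⟨1 / S, by positivity, fun lam hl hld w hw => ?_⟩
    have hlne : lam ≠ 0 := by
      intro h0; simp [h0] at hl
    rw [cylZ_const_mul t f hf lam hlne w]
    apply hSP
    rw [norm_div, le_div_iff₀ hl]
    refine le_of_lt ?_
    calc S * ‖lam‖ < S * (1 / S) := by
            exact mul_lt_mul_of_pos_left hld hS
      _ = 1 := by field_simp
      _ ≤ ‖w‖ := hw.le
  · intro h ε hε
    obtain ⟨δ, hδ, hP⟩ := h ε hε
    refine ⟨3 / δ, by positivity, fun w hw => ?_⟩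
    have hw0 : ‖w‖ ≠ 0 := by
      intro h0
      have : (0:ℝ) < 3 / δ := by positivity
      rw [h0] at hw; linarith
    have hwpos : 0 < ‖w‖ := lt_of_le_of_ne (by positivity) (Ne.symm hw0)
    set lam : ℂ := 2 / w with hlamdef
    have hwne : w ≠ 0 := fun h0 => hw0 (by simp [h0])
    have hlne : lam ≠ 0 := by
      simp [hlamdef, hwne]
    have hla : ‖lam‖ = 2 / ‖w‖ := by
      simp [hlamdef, norm_div]
    have h1 := hP lam (by rw [hla]; positivity)
      (by
        rw [hla]
        rw [div_lt_iff₀ hwpos]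
        calc (2:ℝ) < 3 := by norm_num
          _ = (3 / δ) * δ := by field_simp
          _ ≤ ‖w‖ * δ := mul_le_mul_of_nonneg_right hw hδ.le
          _ = δ * ‖w‖ := mul_comm _ _)
      (lam * w) (by
        rw [norm_mul, hla]
        field_simp
        norm_num)
    rw [cylZ_const_mul t f hf lam hlne (lam * w), mul_div_cancel_left₀ w hlne] at h1
    exact h1
end

section
/- Let f : ℂ → ℂ be a nonconstant entire function, let a, b, c, d ∈ ℂ with a ≠ 0 and c ≠ 0, and let g : ℂ → ℂ be the entire function defined by g(a·z + b) = c·f(z) + d for all z ∈ ℂ (so that g is affinely equivalent to f). Then for every t ≥ 0: Z(t,f,w) → 0 as w → ∞ if and only if Z(t,g,w) → 0 as w → ∞. Consequently the vanishing exponents of f and g coincide: inf{ t ≥ 0 : Z(t,f,w) → 0 as w → ∞ } = inf{ t ≥ 0 : Z(t,g,w) → 0 as w → ∞ }. -/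
open Filter

lemma cylZ_key (f g : ℂ → ℂ) (hf : Differentiable ℂ f) (hg : Differentiable ℂ g)
    (a b c d : ℂ) (ha : a ≠ 0) (hc : c ≠ 0)
    (heq : ∀ z : ℂ, g (a * z + b) = c * f z + d) (t : ℝ) (ht : 0 ≤ t)
    (h : Tendsto (fun w => cylZ t f w) (cocompact ℂ) (nhds 0)) :
    Tendsto (fun w => cylZ t g w) (cocompact ℂ) (nhds 0) := by
  have ha' : 0 < ‖a‖ := norm_pos_iff.mpr ha
  have hc' : 0 < ‖c‖ := norm_pos_iff.mpr hc
  -- derivative relation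
  have hd : ∀ z : ℂ, deriv g (a * z + b) = c / a * deriv f z := by
    intro z
    have h1 : HasDerivAt (fun z => g (a * z + b)) (deriv g (a * z + b) * a) z := by
      have := ((hg (a * z + b)).hasDerivAt).comp z
        (((hasDerivAt_id z).const_mul a).add_const b)
      simpa [Function.comp_def] using this
    have h2 : HasDerivAt (fun z => g (a * z + b)) (c * deriv f z) z := by
      have he : (fun z => g (a * z + b)) = fun z => c * f z + d := funext heq
      rw [he]
      simpa using ((hf z).hasDerivAt.const_mul c).add_const d
    have h3 := h1.unique h2
    field_simp
    linear_combination h3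
  -- constants
  set R : ℝ := (2 * ‖b‖ + 1) / ‖a‖ with hR
  obtain ⟨M, hM⟩ := (isCompact_closedBall (0 : ℂ) R).exists_bound_of_continuousOn
    hf.continuous.continuousOn
  set W : ℝ := max (2 * ‖d‖) (‖c‖ * (M + 1) + ‖d‖) with hW
  set C : ENNReal := ENNReal.ofReal 4 ^ t with hC
  have hCtop : C ≠ ⊤ := ENNReal.rpow_ne_top_of_nonneg ht ENNReal.ofReal_ne_top
  -- the eventual bound
  have hbound : ∀ᶠ w in cocompact ℂ, cylZ t g w ≤ C * cylZ t f ((w - d) / c) := by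
    filter_upwards [tendsto_norm_cocompact_atTop.eventually_ge_atTop W] with w hw
    set v : ℂ := (w - d) / c with hv
    have hwd : ‖w‖ / 2 ≤ ‖w - d‖ := by
      have h1 : ‖w‖ - ‖d‖ ≤ ‖w - d‖ :=
        norm_sub_norm_le w d
      have h2 : 2 * ‖d‖ ≤ ‖w‖ := le_trans (le_max_left _ _) hw
      have : ‖w‖ = ‖w‖ := rfl
      linarith
    have hvabs : ‖v‖ = ‖w - d‖ / ‖c‖ := by
      rw [hv, norm_div]
    have hvlarge : M + 1 ≤ ‖v‖ := by
      have h2 : ‖c‖ * (M + 1) + ‖d‖ ≤ ‖w‖ :=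
        le_trans (le_max_right _ _) hw
      have h1 : ‖w‖ - ‖d‖ ≤ ‖w - d‖ :=
        norm_sub_norm_le w d
      rw [hvabs, le_div_iff₀ hc']
      linarith
    have hwv : ‖w‖ ≤ 2 * ‖c‖ * ‖v‖ := by
      rw [hvabs]
      have heq2 : 2 * ‖c‖ * (‖w - d‖ / ‖c‖)
          = 2 * ‖w - d‖ := by field_simp
      rw [heq2]
      linarith [hwd]
    -- the fibre equivalence
    have hiff : ∀ z : ℂ, f z = v ↔ g ((affineHomeomorph a b ha).toEquiv z) = w := by
      intro z
      simp only [Homeomorph.coe_toEquiv, affineHomeomorph_apply]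
      rw [heq z, hv, eq_div_iff hc]
      constructor <;> intro h' <;> linear_combination h'
    set e : {z : ℂ // f z = v} ≃ {u : ℂ // g u = w} :=
      (affineHomeomorph a b ha).toEquiv.subtypeEquiv hiff with he
    have hsum : cylZ t g w = ∑' z : {z : ℂ // f z = v},
        ENNReal.ofReal (‖w‖ /
          (‖a * z.1 + b‖ * ‖deriv g (a * z.1 + b)‖)) ^ t := by
      rw [cylZ, ← Equiv.tsum_eq e]
      rfl
    rw [hsum, cylZ, ← ENNReal.tsum_mul_left]
    apply ENNReal.tsum_le_tsum
    rintro ⟨z, hz⟩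
    simp only
    -- pointwise estimate
    have hMmax : R ≤ ‖z‖ := by
      by_contra hcon
      push_neg at hcon
      have : z ∈ Metric.closedBall (0 : ℂ) R := by
        simp [Metric.mem_closedBall, Complex.dist_eq]
        exact le_of_lt (by simpa using hcon)
      have := hM z this
      have hfz : ‖f z‖ = ‖v‖ := by rw [hz]
      linarith [hvlarge, hfz ▸ this]
    have hzR : 2 * ‖b‖ + 1 ≤ ‖a‖ * ‖z‖ := by
      rw [hR, div_le_iff₀ ha'] at hMmax
      linarith [hMmax]
    have hu : ‖a‖ * ‖z‖ ≤ 2 * ‖a * z + b‖ := by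
      have h1 : ‖a * z‖ - ‖b‖ ≤ ‖a * z + b‖ := by
        simpa [sub_neg_eq_add] using norm_sub_norm_le (a * z) (-b)
      rw [norm_mul] at h1
      linarith
    have hderiv : ‖deriv g (a * z + b)‖ =
        ‖c‖ / ‖a‖ * ‖deriv f z‖ := by
      rw [hd z, norm_mul, norm_div]
    -- real inequality
    have hreal : ‖w‖ / (‖a * z + b‖ * ‖deriv g (a * z + b)‖)
        ≤ 4 * (‖v‖ / (‖z‖ * ‖deriv f z‖)) := by
      rw [hderiv]
      rcases eq_or_lt_of_le (norm_nonneg (deriv f z)) with h0 | h0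
      · rw [← h0]
        simp
      · have hz' : 0 < ‖z‖ := by nlinarith [ha', norm_nonneg b]
        have hu' : 0 < ‖a * z + b‖ := by nlinarith [ha']
        have hv' : 0 < ‖v‖ := by
          have hR0 : (0:ℝ) ≤ R := by rw [hR]; positivity
          have : (0:ℝ) ≤ M := le_trans (norm_nonneg (f 0))
            (hM 0 (by simpa [Metric.mem_closedBall] using hR0))
          linarith [hvlarge]
        rw [div_le_iff₀ (by positivity), mul_comm (4:ℝ), mul_assoc, div_mul_eq_mul_div,
          le_div_iff₀ (by positivity)]
        have hz2 : ‖z‖ ≤ 2 * ‖a * z + b‖ / ‖a‖ := by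
          rw [le_div_iff₀ ha']; linarith [hu]
        calc ‖w‖ * (‖z‖ * ‖deriv f z‖)
            ≤ (2 * ‖c‖ * ‖v‖) *
              ((2 * ‖a * z + b‖ / ‖a‖) * ‖deriv f z‖) := by
              apply mul_le_mul hwv (mul_le_mul_of_nonneg_right hz2 h0.le)
                (by positivity) (by positivity)
          _ = ‖v‖ * (4 * (‖a * z + b‖ *
              (‖c‖ / ‖a‖ * ‖deriv f z‖))) := by ring
    -- lift to ENNReal
    calc ENNReal.ofReal (‖w‖ /
          (‖a * z + b‖ * ‖deriv g (a * z + b)‖)) ^ t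
        ≤ ENNReal.ofReal (4 * (‖v‖ /
            (‖z‖ * ‖deriv f z‖))) ^ t :=
          ENNReal.rpow_le_rpow (ENNReal.ofReal_le_ofReal hreal) ht
      _ = C * ENNReal.ofReal (‖v‖ /
            (‖z‖ * ‖deriv f z‖)) ^ t := by
          rw [ENNReal.ofReal_mul (by norm_num), ENNReal.mul_rpow_of_nonneg _ _ ht, hC]
  -- conclude by squeezing
  have hphi : Tendsto (fun w : ℂ => (w - d) / c) (cocompact ℂ) (cocompact ℂ) := by
    have : (fun w : ℂ => (w - d) / c) = ⇑(affineHomeomorph c⁻¹ (-(d / c)) (inv_ne_zero hc)) := by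
      funext w
      simp only [affineHomeomorph_apply]
      field_simp
      ring
    rw [this]
    exact (affineHomeomorph c⁻¹ (-(d / c)) (inv_ne_zero hc)).isClosedEmbedding.tendsto_cocompact
  have hlim : Tendsto (fun w : ℂ => C * cylZ t f ((w - d) / c)) (cocompact ℂ) (nhds 0) := by
    simpa using ENNReal.Tendsto.const_mul (a := C) (h.comp hphi) (Or.inr hCtop)
  exact tendsto_of_tendsto_of_tendsto_of_le_of_le' tendsto_const_nhds hlim
    (Eventually.of_forall fun w => zero_le) hbound

theorem stmt5 (f g : ℂ → ℂ) (hf : Differentiable ℂ f) (hnc : ∀ c : ℂ, f ≠ fun _ => c)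
    (hg : Differentiable ℂ g)
    (a b c d : ℂ) (ha : a ≠ 0) (hc : c ≠ 0)
    (heq : ∀ z : ℂ, g (a * z + b) = c * f z + d) :
    (∀ t : ℝ, 0 ≤ t →
      (Tendsto (fun w => cylZ t f w) (cocompact ℂ) (nhds 0) ↔
        Tendsto (fun w => cylZ t g w) (cocompact ℂ) (nhds 0))) ∧
    sInf {t : ℝ | 0 ≤ t ∧ Tendsto (fun w => cylZ t f w) (cocompact ℂ) (nhds 0)} =
      sInf {t : ℝ | 0 ≤ t ∧ Tendsto (fun w => cylZ t g w) (cocompact ℂ) (nhds 0)} := by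
  have heq' : ∀ u : ℂ, f (a⁻¹ * u + -(b / a)) = c⁻¹ * g u + -(d / c) := by
    intro u
    have h1 := heq (a⁻¹ * u + -(b / a))
    have h2 : a * (a⁻¹ * u + -(b / a)) + b = u := by field_simp; ring
    rw [h2] at h1
    rw [h1, mul_add, ← mul_assoc, inv_mul_cancel₀ hc, one_mul]; ring
  have main : ∀ t : ℝ, 0 ≤ t →
      (Tendsto (fun w => cylZ t f w) (cocompact ℂ) (nhds 0) ↔
        Tendsto (fun w => cylZ t g w) (cocompact ℂ) (nhds 0)) := by
    intro t ht
    constructor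
    · exact cylZ_key f g hf hg a b c d ha hc heq t ht
    · exact cylZ_key g f hg hf a⁻¹ (-(b / a)) c⁻¹ (-(d / c))
        (inv_ne_zero ha) (inv_ne_zero hc) heq' t ht
  refine ⟨main, ?_⟩
  congr 1
  ext t
  simp only [Set.mem_setOf_eq]
  exact and_congr_right fun ht => main t ht
end

section
/- Let L : ℂ → ℂ be entire with L(0) = 2πi and L(2πi·z) = 2πi·exp(L(z)) for all z ∈ ℂ (a Poincaré function of f(z) = 2πi·e^z at the repelling fixed point 2πi). Set λ := L'(0) and suppose 0 < |λ| < 1/20. Let r := π/(8|λ|). Then the closure of L(D(0,r)) is contained in the open disc D(0,r); in particular L maps the closed disc of radius r about 0 into the open disc of radius r about 0. -/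
set_option maxHeartbeats 1000000

open Complex Metric Set Real

theorem stmt9 (L : ℂ → ℂ) (hL : Differentiable ℂ L)
    (hL0 : L 0 = 2 * (Real.pi : ℂ) * Complex.I)
    (hfun : ∀ z : ℂ, L (2 * (Real.pi : ℂ) * Complex.I * z)
      = 2 * (Real.pi : ℂ) * Complex.I * Complex.exp (L z))
    (hlam0 : 0 < ‖deriv L 0‖)
    (hlam : ‖deriv L 0‖ < 1 / 20) :
    closure (L '' Metric.ball 0 (Real.pi / (8 * ‖deriv L 0‖)))
        ⊆ Metric.ball 0 (Real.pi / (8 * ‖deriv L 0‖)) ∧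
      Set.MapsTo L (Metric.closedBall 0 (Real.pi / (8 * ‖deriv L 0‖)))
        (Metric.ball 0 (Real.pi / (8 * ‖deriv L 0‖))) := by
  have hπ : (3.14 : ℝ) < Real.pi := by
    have := Real.pi_gt_d6; linarith
  have hπ' : Real.pi < 3.15 := by
    have := Real.pi_lt_d2; linarith
  set a : ℝ := ‖deriv L 0‖ with ha
  set r : ℝ := Real.pi / (8 * a) with hr
  have hrpos : 0 < r := by positivity
  have har : a * r = Real.pi / 8 := by
    rw [hr]
    field_simp
  set ρ : ℂ := 2 * (Real.pi : ℂ) * Complex.I with hρ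
  have hρabs : ‖ρ‖ = 2 * Real.pi := by
    simp [hρ, abs_of_pos Real.pi_pos]
  have hρne : ρ ≠ 0 := by
    intro h
    rw [h] at hρabs
    simp at hρabs
  set g : ℂ → ℂ := fun w => L w - ρ with hg
  have hg0 : g 0 = 0 := by simp [hg, hL0, hρ]
  have hgfun : ∀ w : ℂ, g (ρ * w) = ρ * (Complex.exp (g w) - 1) := by
    intro w
    have hexp : Complex.exp (L w) = Complex.exp (g w) := by
      have : L w = g w + ρ := by simp [hg]
      rw [this, Complex.exp_add, hρ, Complex.exp_two_pi_mul_I, mul_one]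
    simp only [hg]
    rw [hfun w, hexp]
    ring
  -- basic bounds
  have h132 : Real.exp (1/32 : ℝ) ≤ 32/31 := by
    have h1 : (1 : ℝ) - 1/32 ≤ Real.exp (-(1/32)) := by
      have := Real.add_one_le_exp (-(1/32) : ℝ); linarith
    have h2 : (0:ℝ) < Real.exp (-(1/32)) := Real.exp_pos _
    rw [show (1/32 : ℝ) = -(-(1/32)) by ring, Real.exp_neg]
    rw [inv_le_comm₀ (by positivity) (by norm_num)] at *
    · linarith
  -- step lemma
  have step : ∀ w : ℂ, ‖w‖ ≤ r / (2 * Real.pi) →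
      ‖g w‖ ≤ 2 * a * ‖w‖ * Real.exp (a * ‖w‖ / 2) →
      ‖g (ρ * w)‖ ≤ 2 * a * ‖ρ * w‖
        * Real.exp (a * ‖ρ * w‖ / 2) := by
    intro w hw hb
    set t : ℝ := ‖w‖ with ht
    have ht0 : 0 ≤ t := norm_nonneg w
    have hat : a * t ≤ 1/16 := by
      have : a * t ≤ a * (r / (2 * Real.pi)) :=
        mul_le_mul_of_nonneg_left hw (norm_nonneg _)
      have h2 : a * (r / (2 * Real.pi)) = (Real.pi / 8) / (2 * Real.pi) := by
        rw [← har]; ring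
      rw [h2] at this
      have h3 : (Real.pi / 8) / (2 * Real.pi) = 1/16 := by
        field_simp
        ring
      linarith [this, h3.le]
    have hexpat : Real.exp (a * t / 2) ≤ 32/31 := by
      calc Real.exp (a * t / 2) ≤ Real.exp (1/32) := by
            apply Real.exp_le_exp.2; linarith
        _ ≤ 32/31 := h132
    set s : ℝ := ‖g w‖ with hs
    have hs0 : 0 ≤ s := norm_nonneg _
    have hsb : s ≤ 2 * a * t * (32/31) := by
      calc s ≤ 2 * a * t * Real.exp (a * t / 2) := hb
        _ ≤ 2 * a * t * (32/31) := by
            apply mul_le_mul_of_nonneg_left hexpat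
            positivity
    have hs1 : s ≤ 1 := by nlinarith
    have hexpsub : ‖Complex.exp (g w) - 1‖ ≤ s + s^2 := by
      have h1 := Complex.norm_exp_sub_one_sub_id_le (x := g w) hs1
      calc ‖Complex.exp (g w) - 1‖
          = ‖(Complex.exp (g w) - 1 - g w) + g w‖ := by ring_nf
        _ ≤ ‖Complex.exp (g w) - 1 - g w‖ + ‖g w‖ :=
            norm_add_le _ _
        _ ≤ s^2 + s := by
            have h2 : ‖g w‖ = s := rfl
            rw [h2] at h1 ⊢
            linarith
        _ = s + s^2 := by ring
    have habsρw : ‖ρ * w‖ = 2 * Real.pi * t := by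
      rw [norm_mul, hρabs, ht]
    rw [hgfun w, norm_mul, hρabs, habsρw]
    -- goal : 2π * |exp(g w)-1| ≤ 2a(2πt) exp(a 2πt/2)
    have key : s * (1 + s) ≤ 2 * a * t * Real.exp (a * (2 * Real.pi * t) / 2) := by
      have h1 : 1 + s ≤ Real.exp ((Real.pi - 1/2) * (a * t)) := by
        have h2 : s ≤ (Real.pi - 1/2) * (a * t) := by nlinarith
        have h3 := Real.add_one_le_exp ((Real.pi - 1/2) * (a * t))
        linarith
      calc s * (1 + s) ≤ (2 * a * t * Real.exp (a * t / 2)) * Real.exp ((Real.pi - 1/2) * (a * t)) := by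
            apply mul_le_mul hb h1 (by linarith) (by positivity)
        _ = 2 * a * t * Real.exp (a * t / 2 + (Real.pi - 1/2) * (a * t)) := by
            rw [Real.exp_add]; ring
        _ = 2 * a * t * Real.exp (a * (2 * Real.pi * t) / 2) := by
            congr 1; ring
    calc 2 * Real.pi * ‖Complex.exp (g w) - 1‖
        ≤ 2 * Real.pi * (s + s^2) := by
          apply mul_le_mul_of_nonneg_left hexpsub (by positivity)
      _ = 2 * Real.pi * (s * (1 + s)) := by ring
      _ ≤ 2 * Real.pi * (2 * a * t * Real.exp (a * (2 * Real.pi * t) / 2)) := by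
          apply mul_le_mul_of_nonneg_left key (by positivity)
      _ = 2 * a * (2 * Real.pi * t) * Real.exp (a * (2 * Real.pi * t) / 2) := by ring
  -- derivative : base case radius
  have hder : HasDerivAt g (deriv L 0) 0 := by
    have := (hL 0).hasDerivAt
    exact this.sub_const ρ
  have hlit := (hasDerivAt_iff_isLittleO.1 hder).def hlam0
  rw [Metric.eventually_nhds_iff] at hlit
  obtain ⟨ε, hε, hlit⟩ := hlit
  set δ : ℝ := ε / 2 with hδ
  have hδ0 : 0 < δ := by positivity
  have hbase : ∀ w : ℂ, ‖w‖ ≤ δ → ‖g w‖ ≤ 2 * a * ‖w‖ := by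
    intro w hw
    have h1 : dist w 0 < ε := by
      rw [Complex.dist_eq, sub_zero]; linarith
    have h2 := hlit h1
    rw [hg0] at h2
    simp only [sub_zero, smul_eq_mul] at h2
    have h3 : ‖g w - w * deriv L 0‖ ≤ a * ‖w‖ := h2
    calc ‖g w‖ = ‖(g w - w * deriv L 0) + w * deriv L 0‖ := by ring_nf
      _ ≤ ‖g w - w * deriv L 0‖ + ‖w * deriv L 0‖ :=
          norm_add_le _ _
      _ ≤ a * ‖w‖ + ‖w‖ * a := by
          rw [norm_mul]; exact add_le_add h3 (le_refl _)
      _ = 2 * a * ‖w‖ := by ring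
  -- main induction
  have main : ∀ m : ℕ, ∀ w : ℂ, ‖w‖ ≤ r → ‖w‖ ≤ δ * (2*Real.pi)^m →
      ‖g w‖ ≤ 2 * a * ‖w‖ * Real.exp (a * ‖w‖ / 2) := by
    intro m
    induction m with
    | zero =>
      intro w _ h2
      simp only [pow_zero, mul_one] at h2
      have := hbase w h2
      have he : (1:ℝ) ≤ Real.exp (a * ‖w‖ / 2) := Real.one_le_exp (by positivity)
      nlinarith [norm_nonneg w, this, mul_le_mul_of_nonneg_left he
        (show (0:ℝ) ≤ 2 * a * ‖w‖ by positivity)]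
    | succ m ih =>
      intro w h1 h2
      set v : ℂ := w / ρ with hv
      have hwv : ρ * v = w := by rw [hv]; field_simp
      have habsv : ‖v‖ = ‖w‖ / (2 * Real.pi) := by
        rw [hv, norm_div, hρabs]
      have h2π : (1:ℝ) ≤ 2 * Real.pi := by linarith
      have hv1 : ‖v‖ ≤ r := by
        rw [habsv]
        calc ‖w‖ / (2 * Real.pi) ≤ r / (2 * Real.pi) := by
              apply div_le_div_of_nonneg_right h1 (by linarith)
          _ ≤ r := by
              rw [div_le_iff₀ (by linarith)]
              nlinarith
      have hv2 : ‖v‖ ≤ δ * (2*Real.pi)^m := by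
        rw [habsv, div_le_iff₀ (by linarith)]
        calc ‖w‖ ≤ δ * (2*Real.pi)^(m+1) := h2
          _ = δ * (2*Real.pi)^m * (2*Real.pi) := by ring
      have hv3 : ‖v‖ ≤ r / (2 * Real.pi) := by
        rw [habsv]
        apply div_le_div_of_nonneg_right h1 (by linarith)
      have := step v hv3 (ih v hv1 hv2)
      rwa [hwv] at this
  -- conclude pointwise bound
  have key : ∀ z : ℂ, ‖z‖ ≤ r → ‖L z‖ < r := by
    intro z hz
    obtain ⟨m, hm⟩ := pow_unbounded_of_one_lt (r / δ) (show (1:ℝ) < 2*Real.pi by linarith)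
    have hz' : ‖z‖ ≤ δ * (2*Real.pi)^m := by
      have : r / δ < (2*Real.pi)^m := hm
      rw [div_lt_iff₀ hδ0] at this
      linarith
    have hgz := main m z hz hz'
    have hat : a * ‖z‖ ≤ Real.pi / 8 := by
      calc a * ‖z‖ ≤ a * r := mul_le_mul_of_nonneg_left hz (norm_nonneg _)
        _ = Real.pi / 8 := har
    have hexp : Real.exp (a * ‖z‖ / 2) ≤ 5/4 := by
      have h1 : a * ‖z‖ / 2 ≤ 1/5 := by linarith
      have h2 : (1:ℝ) - 1/5 ≤ Real.exp (-(1/5)) := by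
        have := Real.add_one_le_exp (-(1/5) : ℝ); linarith
      calc Real.exp (a * ‖z‖ / 2) ≤ Real.exp (1/5) := Real.exp_le_exp.2 h1
        _ ≤ 5/4 := by
            rw [show (1/5 : ℝ) = -(-(1/5)) by ring, Real.exp_neg]
            rw [inv_le_comm₀ (Real.exp_pos _) (by norm_num)]
            linarith
    have hgz2 : ‖g z‖ ≤ 2 * (Real.pi/8) * (5/4) := by
      calc ‖g z‖ ≤ 2 * a * ‖z‖ * Real.exp (a * ‖z‖ / 2) := hgz
        _ = 2 * (a * ‖z‖) * Real.exp (a * ‖z‖ / 2) := by ring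
        _ ≤ 2 * (Real.pi/8) * (5/4) := by
            apply mul_le_mul (by nlinarith [norm_nonneg z]) hexp
              (Real.exp_pos _).le (by positivity)
    have hLz : ‖L z‖ ≤ 2 * Real.pi + 5 * Real.pi / 16 := by
      calc ‖L z‖ = ‖g z + ρ‖ := by simp [hg]
        _ ≤ ‖g z‖ + ‖ρ‖ := norm_add_le _ _
        _ ≤ 2 * (Real.pi/8) * (5/4) + 2 * Real.pi := by rw [hρabs]; linarith
        _ = 2 * Real.pi + 5 * Real.pi / 16 := by ring
    have hrbig : 5 * Real.pi / 2 < r := by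
      rw [hr, lt_div_iff₀ (by positivity)]
      nlinarith [Real.pi_pos]
    linarith
  have hmap : Set.MapsTo L (Metric.closedBall 0 r) (Metric.ball 0 r) := by
    intro z hz
    rw [Metric.mem_closedBall, Complex.dist_eq, sub_zero] at hz
    rw [Metric.mem_ball, Complex.dist_eq, sub_zero]
    exact key z hz
  refine ⟨?_, hmap⟩
  have hcl : IsClosed (L '' Metric.closedBall 0 r) :=
    ((isCompact_closedBall (0:ℂ) r).image hL.continuous).isClosed
  have h1 : L '' Metric.ball 0 r ⊆ L '' Metric.closedBall 0 r :=
    Set.image_mono Metric.ball_subset_closedBall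
  calc closure (L '' Metric.ball 0 r) ⊆ L '' Metric.closedBall 0 r :=
        closure_minimal h1 hcl
    _ ⊆ Metric.ball 0 r := hmap.image_subset
end

section
/- Let L : ℂ → ℂ be entire with L(0) = 2πi and L(2πi·z) = 2πi·exp(L(z)) for all z ∈ ℂ (a Poincaré function of f(z) = 2πi·e^z at the repelling fixed point 2πi), and set λ := L'(0) with λ ≠ 0. Then L is injective on the open disc D(0, π/(4|λ|)). -/
open Complex

lemma exp_half_lt_two : Real.exp (1/2 : ℝ) < 2 := by
  have h : Real.exp (1/2 : ℝ) * Real.exp (1/2 : ℝ) = Real.exp 1 := by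
    rw [← Real.exp_add]; norm_num
  nlinarith [Real.exp_one_lt_d9, Real.exp_pos (1/2 : ℝ)]

set_option maxHeartbeats 1000000 in
lemma poincare_bound (u : ℂ → ℂ) (l ρ : ℂ) (hl : l ≠ 0)
    (hρabs : ‖ρ‖ = 2 * Real.pi)
    (hu : HasDerivAt u l 0) (hu0 : u 0 = 0)
    (hfe : ∀ z : ℂ, u (ρ * z) = ρ * (Complex.exp (u z) - 1)) :
    ∀ z : ℂ, ‖l‖ * ‖z‖ ≤ 1/8 →
      ‖u z‖ ≤ 2 * (‖l‖ * ‖z‖)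
        * Real.exp (4 * (‖l‖ * ‖z‖)) := by
  have hπ : (3:ℝ) < Real.pi := Real.pi_gt_three
  have hlpos : 0 < ‖l‖ := norm_pos_iff.mpr hl
  have hρ0 : ρ ≠ 0 := by
    intro h; rw [h] at hρabs; simp at hρabs
  -- base case from differentiability
  have hlit : (fun z : ℂ => u z - u 0 - (z - 0) • l) =o[nhds 0] fun z => z - 0 :=
    hasDerivAt_iff_isLittleO.mp hu
  have hev : ∀ᶠ z : ℂ in nhds 0, ‖u z - u 0 - (z - 0) • l‖ ≤ ‖l‖ * ‖z - 0‖ :=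
    hlit.bound hlpos
  rw [Metric.eventually_nhds_iff] at hev
  obtain ⟨δ, hδpos, hbase'⟩ := hev
  have hbase : ∀ z : ℂ, ‖z‖ < δ →
      ‖u z‖ ≤ 2 * (‖l‖ * ‖z‖) := by
    intro z hz
    have h1 := hbase' (by simpa [Complex.dist_eq] using hz)
    simp only [hu0, sub_zero, smul_eq_mul] at h1
    have h2 : ‖z * l‖ = ‖z‖ * ‖l‖ := norm_mul _ _
    calc ‖u z‖ ≤ ‖u z - z * l‖ + ‖z * l‖ := by
          simpa using norm_add_le (u z - z * l) (z * l)
      _ ≤ 2 * (‖l‖ * ‖z‖) := by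
          rw [h2]
          have : ‖u z - z * l‖ ≤ ‖l‖ * ‖z‖ := h1
          nlinarith [norm_nonneg z, norm_nonneg l]
  -- main induction over scales
  have key : ∀ n : ℕ, ∀ z : ℂ, ‖z‖ < δ * (2 * Real.pi)^n →
      ‖l‖ * ‖z‖ ≤ 1/8 →
      ‖u z‖ ≤ 2 * (‖l‖ * ‖z‖)
        * Real.exp (4 * (‖l‖ * ‖z‖)) := by
    intro n
    induction n with
    | zero =>
      intro z hz _
      have h1 := hbase z (by simpa using hz)
      have h2 : (1:ℝ) ≤ Real.exp (4 * (‖l‖ * ‖z‖)) :=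
        Real.one_le_exp (by positivity)
      nlinarith [norm_nonneg (u z), norm_nonneg z, norm_nonneg l]
    | succ n ih =>
      intro z hz hz8
      by_cases hsm : ‖z‖ < δ * (2 * Real.pi)^n
      · exact ih z hsm hz8
      · push_neg at hsm
        set w : ℂ := z / ρ with hw
        have hzw : z = ρ * w := by rw [hw]; field_simp
        have habsw : ‖w‖ = ‖z‖ / (2 * Real.pi) := by
          rw [hw, norm_div, hρabs]
        set s : ℝ := ‖l‖ * ‖w‖ with hs
        have hs0 : 0 ≤ s := by positivity
        have hsz : ‖l‖ * ‖z‖ = 2 * Real.pi * s := by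
          rw [hs, habsw]; field_simp; try ring
        have hs16 : s ≤ 1 / (16 * Real.pi) := by
          rw [hsz] at hz8
          rw [le_div_iff₀ (by positivity : (0:ℝ) < 16 * Real.pi)]
          nlinarith
        have hs8 : s ≤ 1/8 := by nlinarith
        have hwlt : ‖w‖ < δ * (2 * Real.pi)^n := by
          rw [habsw]
          rw [pow_succ] at hz
          rw [div_lt_iff₀ (by nlinarith : (0:ℝ) < 2 * Real.pi)]
          nlinarith
        have hA := ih w hwlt hs8
        rw [← hs] at hA
        have hexp4s : Real.exp (4 * s) ≤ 2 := by
          have : Real.exp (4 * s) ≤ Real.exp (1/2) :=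
            Real.exp_le_exp.mpr (by nlinarith)
          nlinarith [exp_half_lt_two]
        have hA4 : ‖u w‖ ≤ 4 * s := by nlinarith
        have hA1 : ‖u w‖ ≤ 1 := by nlinarith
        -- |exp(u w) - 1| ≤ |u w| + |u w|^2
        have hexp : ‖Complex.exp (u w) - 1‖ ≤
            ‖u w‖ + ‖u w‖^2 := by
          calc ‖Complex.exp (u w) - 1‖
              = ‖(Complex.exp (u w) - 1 - u w) + u w‖ := by ring_nf
            _ ≤ ‖Complex.exp (u w) - 1 - u w‖ + ‖u w‖ :=
                norm_add_le _ _
            _ ≤ ‖u w‖ + ‖u w‖^2 := by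
                have := Complex.norm_exp_sub_one_sub_id_le hA1
                nlinarith
        have huz : ‖u z‖ = 2 * Real.pi * ‖Complex.exp (u w) - 1‖ := by
          rw [hzw, hfe w, norm_mul, hρabs]
        -- now conclude
        have honeA : 1 + ‖u w‖ ≤ Real.exp (‖u w‖) := by
          linarith [Real.add_one_le_exp (‖u w‖)]
        have hexpA : Real.exp (‖u w‖) ≤ Real.exp (4 * s) :=
          Real.exp_le_exp.mpr hA4
        have hfinal : ‖u z‖ ≤ 2 * Real.pi * (2 * s * Real.exp (4*s) * Real.exp (4*s)) := by
          rw [huz]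
          have hAnn := norm_nonneg (u w)
          have h1A : ‖u w‖ + ‖u w‖^2
              = ‖u w‖ * (1 + ‖u w‖) := by ring
          have h2A : ‖u w‖ * (1 + ‖u w‖)
              ≤ (2 * s * Real.exp (4*s)) * Real.exp (4*s) := by
            apply mul_le_mul hA (le_trans honeA hexpA) (by positivity) (by positivity)
          nlinarith
        -- RHS target
        rw [hsz]
        calc ‖u z‖ ≤ 2 * Real.pi * (2 * s * Real.exp (4*s) * Real.exp (4*s)) := hfinal
          _ = 2 * (2 * Real.pi * s) * Real.exp (8 * s) := by
              rw [show (8:ℝ) * s = 4 * s + 4 * s by ring, Real.exp_add]; ring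
          _ ≤ 2 * (2 * Real.pi * s) * Real.exp (4 * (2 * Real.pi * s)) := by
              have h := Real.exp_le_exp.mpr (show (8:ℝ) * s ≤ 4 * (2 * Real.pi * s) by nlinarith)
              exact mul_le_mul_of_nonneg_left h (by positivity)
  -- finish: find n
  intro z hz8
  obtain ⟨n, hn⟩ := pow_unbounded_of_one_lt (‖z‖ / δ) (by nlinarith : (1:ℝ) < 2 * Real.pi)
  exact key n z (by rw [div_lt_iff₀ hδpos] at hn; nlinarith) hz8


theorem stmt10 (L : ℂ → ℂ) (hL : Differentiable ℂ L)
    (hL0 : L 0 = 2 * (Real.pi : ℂ) * Complex.I)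
    (hfun : ∀ z : ℂ, L (2 * (Real.pi : ℂ) * Complex.I * z)
      = 2 * (Real.pi : ℂ) * Complex.I * Complex.exp (L z))
    (hlam : deriv L 0 ≠ 0) :
    Set.InjOn L (Metric.ball 0 (Real.pi / (4 * ‖deriv L 0‖))) := by
  have hπ : (3:ℝ) < Real.pi := Real.pi_gt_three
  set l : ℂ := deriv L 0 with hldef
  set ρ : ℂ := 2 * (Real.pi : ℂ) * Complex.I with hρdef
  have hlpos : 0 < ‖l‖ := norm_pos_iff.mpr hlam
  have hρabs : ‖ρ‖ = 2 * Real.pi := by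
    rw [hρdef]
    simp [norm_mul, Complex.norm_two, Complex.norm_I, Complex.norm_real,
      abs_of_pos Real.pi_pos]
  have hρ0 : ρ ≠ 0 := by
    intro h; rw [h] at hρabs; simp at hρabs
  set u : ℂ → ℂ := fun z => L z - ρ with hudef
  have hu0 : u 0 = 0 := by simp [hudef, hL0, hρdef]
  have huder : HasDerivAt u l 0 := by
    have h1 : HasDerivAt L l 0 := by
      rw [hldef]; exact (hL 0).hasDerivAt
    exact h1.sub_const ρ
  have hexpρ : Complex.exp ρ = 1 := by rw [hρdef]; exact Complex.exp_two_pi_mul_I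
  have hfe : ∀ z : ℂ, u (ρ * z) = ρ * (Complex.exp (u z) - 1) := by
    intro z
    have h1 : Complex.exp (L z) = Complex.exp (u z) := by
      have : L z = u z + ρ := by simp [hudef]
      rw [this, Complex.exp_add, hexpρ, mul_one]
    simp only [hudef]
    rw [hfun z, h1]; ring
  have hbd := poincare_bound u l ρ hlam hρabs huder hu0 hfe
  -- a uniform bound at small scales
  have hsmall : ∀ x : ℂ, ‖l‖ * ‖x‖ ≤ 1/8 →
      ‖u x‖ ≤ 1/2 := by
    intro x hx
    have h1 := hbd x hx
    have hx0 : 0 ≤ ‖l‖ * ‖x‖ := by positivity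
    have h2 : Real.exp (4 * (‖l‖ * ‖x‖)) ≤ 2 := by
      have := Real.exp_le_exp.mpr (show 4 * (‖l‖ * ‖x‖) ≤ 1/2 by linarith)
      linarith [exp_half_lt_two]
    nlinarith
  -- main: take a b in the ball with equal values
  intro a ha b hb hab
  simp only [Metric.mem_ball, Complex.dist_eq, sub_zero] at ha hb
  -- scale bound for points a / ρ^(n+1)
  have hscale : ∀ x : ℂ, ‖x‖ < Real.pi / (4 * ‖l‖) → ∀ n : ℕ,
      ‖l‖ * ‖x / ρ^(n+1)‖ ≤ 1/8 := by
    intro x hx n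
    have habs : ‖x / ρ^(n+1)‖ = ‖x‖ / (2*Real.pi)^(n+1) := by
      rw [norm_div, norm_pow, hρabs]
    have hpow1 : 2 * Real.pi ≤ (2*Real.pi)^(n+1) :=
      le_self_pow₀ (by nlinarith) (Nat.succ_ne_zero n)
    have hpowpos : (0:ℝ) < (2*Real.pi)^(n+1) := by positivity
    have h1 : ‖x‖ / (2*Real.pi)^(n+1) ≤ ‖x‖ / (2*Real.pi) :=
      div_le_div_of_nonneg_left (norm_nonneg x) (by nlinarith) hpow1
    have h2 : ‖l‖ * ‖x‖ < Real.pi / 4 := by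
      have := mul_lt_mul_of_pos_left hx hlpos
      rwa [show ‖l‖ * (Real.pi / (4 * ‖l‖)) = Real.pi / 4 by
        field_simp] at this
    rw [habs]
    rw [show ‖l‖ * (‖x‖ / (2*Real.pi)^(n+1))
        = ‖l‖ * ‖x‖ / (2*Real.pi)^(n+1) by ring]
    rw [div_le_iff₀ hpowpos]
    nlinarith [norm_nonneg x, norm_nonneg l]
  -- downward induction
  have key : ∀ n : ℕ, L (a / ρ^n) = L (b / ρ^n) := by
    intro n
    induction n with
    | zero => simpa using hab
    | succ n ih =>
      have hrewa : ρ * (a / ρ^(n+1)) = a / ρ^n := by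
        rw [pow_succ]; field_simp
      have hrewb : ρ * (b / ρ^(n+1)) = b / ρ^n := by
        rw [pow_succ]; field_simp
      have hea : L (a / ρ^n) = ρ * Complex.exp (L (a / ρ^(n+1))) := by
        rw [← hrewa]; exact hfun _
      have heb : L (b / ρ^n) = ρ * Complex.exp (L (b / ρ^(n+1))) := by
        rw [← hrewb]; exact hfun _
      have hexpeq : Complex.exp (L (a / ρ^(n+1))) = Complex.exp (L (b / ρ^(n+1))) := by
        have := ih
        rw [hea, heb] at this
        exact mul_left_cancel₀ hρ0 this
      obtain ⟨k, hk⟩ := Complex.exp_eq_exp_iff_exists_int.mp hexpeq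
      have hdiff : ‖L (a / ρ^(n+1)) - L (b / ρ^(n+1))‖ ≤ 1 := by
        have hua := hsmall _ (hscale a ha n)
        have hub := hsmall _ (hscale b hb n)
        have : L (a / ρ^(n+1)) - L (b / ρ^(n+1)) = u (a / ρ^(n+1)) - u (b / ρ^(n+1)) := by
          simp [hudef]
        rw [this]
        calc ‖u (a / ρ^(n+1)) - u (b / ρ^(n+1))‖
            ≤ ‖u (a / ρ^(n+1))‖ + ‖u (b / ρ^(n+1))‖ := by
              simpa [sub_eq_add_neg] using norm_add_le (u (a / ρ^(n+1))) (-(u (b / ρ^(n+1))))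
          _ ≤ 1 := by linarith
      have hk0 : k = 0 := by
        by_contra hkne
        have h1 : ‖L (a / ρ^(n+1)) - L (b / ρ^(n+1))‖
            = |(k:ℝ)| * (2 * Real.pi) := by
          rw [hk]
          rw [show L (b / ρ^(n+1)) + k * (2*(Real.pi:ℂ)*Complex.I) - L (b / ρ^(n+1))
              = (k:ℂ) * (2*(Real.pi:ℂ)*Complex.I) by ring]
          rw [norm_mul]
          rw [show ‖2*(Real.pi:ℂ)*Complex.I‖ = 2 * Real.pi from hρabs ▸ (by rw [hρdef])]
          simp [Complex.norm_intCast]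
        have h2 : (1:ℝ) ≤ |(k:ℝ)| := by
          rw [show |(k:ℝ)| = ((|k| : ℤ) : ℝ) by rw [Int.cast_abs]]
          exact_mod_cast Int.one_le_abs hkne
        rw [h1] at hdiff
        nlinarith
      rw [hk0] at hk
      simpa using hk
  -- local injectivity via inverse function theorem
  have hst : HasStrictDerivAt L l 0 := by
    have hc : ContDiffAt ℂ 1 L 0 := (hL.analyticAt 0).contDiffAt
    simpa [hldef] using hc.hasStrictDerivAt one_ne_zero
  have hev := (hst.hasStrictFDerivAt_equiv hlam).eventually_left_inverse
  rw [Metric.eventually_nhds_iff] at hev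
  obtain ⟨ε, hε, hg⟩ := hev
  obtain ⟨n, hn⟩ := pow_unbounded_of_one_lt
    ((max (‖a‖) (‖b‖)) / ε) (by nlinarith : (1:ℝ) < 2 * Real.pi)
  have hpowpos : (0:ℝ) < (2*Real.pi)^n := by positivity
  have hda : dist (a / ρ^n) 0 < ε := by
    rw [Complex.dist_eq, sub_zero, norm_div, norm_pow, hρabs, div_lt_iff₀ hpowpos]
    rw [div_lt_iff₀ hε] at hn
    have : ‖a‖ ≤ max (‖a‖) (‖b‖) := le_max_left _ _
    nlinarith
  have hdb : dist (b / ρ^n) 0 < ε := by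
    rw [Complex.dist_eq, sub_zero, norm_div, norm_pow, hρabs, div_lt_iff₀ hpowpos]
    rw [div_lt_iff₀ hε] at hn
    have : ‖b‖ ≤ max (‖a‖) (‖b‖) := le_max_right _ _
    nlinarith
  have ha' := hg hda
  have hb' := hg hdb
  rw [key n] at ha'
  have : a / ρ^n = b / ρ^n := ha'.symm.trans hb'
  field_simp at this
  exact this
end

section
/- Let M > 1 and c ∈ ℂ, and let Q := { u ∈ ℂ : |Re(u − c)| < M and |Im(u − c)| < M } and Q' := { u ∈ ℂ : |Re(u − c)| < M − 1 and |Im(u − c)| < M − 1 } be the concentric open squares of half-sides M and M − 1 centred at c. Let D ⊆ ℂ be an open set, let φ : D → Q be a biholomorphism of D onto Q, and let g be holomorphic on D with |g(z) − φ(z)| < 1 for all z ∈ D. Then there exists an open set U ⊆ D such that g maps U bijectively onto Q' (in particular g is injective on U with g(U) = Q'). -/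
open Set Metric Complex

noncomputable def moeb (p z : ℂ) : ℂ := (z - p) / (1 - (starRingEnd ℂ) p * z)

lemma moeb_denom_ne {p z : ℂ} (hp : ‖p‖ < 1) (hz : ‖z‖ ≤ 1) :
    1 - (starRingEnd ℂ) p * z ≠ 0 := by
  intro h
  have h1 : (starRingEnd ℂ) p * z = 1 := by
    have := sub_eq_zero.mp h; exact this.symm
  have h2 : ‖(starRingEnd ℂ) p * z‖ < 1 := by
    rw [norm_mul, Complex.norm_conj]
    calc ‖p‖ * ‖z‖ ≤ ‖p‖ * 1 :=
          mul_le_mul_of_nonneg_left hz (norm_nonneg p)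
      _ < 1 := by simpa using hp
  rw [h1] at h2; simp at h2

lemma normSq_sub' (p z : ℂ) :
    normSq (z - p) = normSq z - 2 * ((starRingEnd ℂ) p * z).re + normSq p := by
  simp [normSq_apply, Complex.sub_re, Complex.sub_im, Complex.mul_re, Complex.mul_im,
    Complex.conj_re, Complex.conj_im]
  ring

lemma normSq_denom' (p z : ℂ) :
    normSq (1 - (starRingEnd ℂ) p * z)
      = 1 - 2 * ((starRingEnd ℂ) p * z).re + normSq p * normSq z := by
  simp [normSq_apply, Complex.sub_re, Complex.sub_im, Complex.mul_re, Complex.mul_im,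
    Complex.conj_re, Complex.conj_im, Complex.one_re, Complex.one_im]
  ring

lemma moeb_lt_one {p z : ℂ} (hp : ‖p‖ < 1) (hz : ‖z‖ < 1) :
    ‖moeb p z‖ < 1 := by
  have hd : 1 - (starRingEnd ℂ) p * z ≠ 0 := moeb_denom_ne hp hz.le
  have h1 : normSq (z - p) < normSq (1 - (starRingEnd ℂ) p * z) := by
    rw [normSq_sub', normSq_denom']
    have hp2 : normSq p < 1 := by
      have := Complex.sq_norm p; nlinarith [norm_nonneg p]
    have hz2 : normSq z < 1 := by
      have := Complex.sq_norm z; nlinarith [norm_nonneg z]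
    nlinarith
  have : ‖z - p‖ < ‖1 - (starRingEnd ℂ) p * z‖ := by
    have := Complex.sq_norm (z - p); have := Complex.sq_norm (1 - (starRingEnd ℂ) p * z)
    nlinarith [norm_nonneg (z - p), norm_nonneg (1 - (starRingEnd ℂ) p * z)]
  rw [moeb, norm_div]
  rw [div_lt_one (norm_pos_iff.mpr hd)]
  · exact this

lemma moeb_abs_le {m : ℝ} (hm : m < 1) {p z : ℂ}
    (hp : ‖p‖ ≤ m) (hz : ‖z‖ ≤ m) :
    ‖moeb p z‖ ≤ 2 * m / (1 + m ^ 2) := by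
  have hm0 : 0 ≤ m := le_trans (norm_nonneg p) hp
  have hp1 : ‖p‖ < 1 := lt_of_le_of_lt hp hm
  have hz1 : ‖z‖ ≤ 1 := le_trans hz (le_of_lt hm)
  have hd : 1 - (starRingEnd ℂ) p * z ≠ 0 := moeb_denom_ne hp1 hz1
  set α := ‖p‖ with hα
  set β := ‖z‖ with hβ
  set t := ((starRingEnd ℂ) p * z).re with htdef
  have hα0 : 0 ≤ α := norm_nonneg p
  have hβ0 : 0 ≤ β := norm_nonneg z
  have ht : -(α * β) ≤ t := by
    have h1 : |t| ≤ ‖(starRingEnd ℂ) p * z‖ := Complex.abs_re_le_norm _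
    have h2 : ‖(starRingEnd ℂ) p * z‖ = α * β := by
      rw [norm_mul, Complex.norm_conj]
    rw [h2] at h1
    have := neg_abs_le t
    linarith
  set A := ‖z - p‖ with hA
  set B := ‖1 - (starRingEnd ℂ) p * z‖ with hB
  have hA0 : 0 ≤ A := norm_nonneg _
  have hB0 : 0 < B := norm_pos_iff.mpr hd
  have hA2 : A ^ 2 = β ^ 2 - 2 * t + α ^ 2 := by
    rw [hA, Complex.sq_norm, normSq_sub']
    rw [← Complex.sq_norm z, ← Complex.sq_norm p]
  have hB2 : B ^ 2 = 1 - 2 * t + α ^ 2 * β ^ 2 := by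
    rw [hB, Complex.sq_norm, normSq_denom']
    rw [← Complex.sq_norm z, ← Complex.sq_norm p]
  have h1 : 0 ≤ (m - α) * (1 - m * β) :=
    mul_nonneg (by linarith) (by nlinarith)
  have h2 : 0 ≤ (m - β) * (1 - m * α) :=
    mul_nonneg (by linarith) (by nlinarith)
  have hQ : 0 ≤ 2 * m * (1 + α * β) + (1 + m ^ 2) * (α + β) := by positivity
  have step1 : (A * (1 + m ^ 2)) ^ 2 ≤ (2 * m * B) ^ 2 := by
    nlinarith [mul_nonneg (add_nonneg h1 h2) hQ,
      mul_nonneg (by linarith : (0:ℝ) ≤ t + α * β) (sq_nonneg (1 - m ^ 2))]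
  have step2 : A * (1 + m ^ 2) ≤ 2 * m * B := by
    nlinarith [step1, mul_nonneg hA0 (by positivity : (0:ℝ) ≤ 1 + m ^ 2),
      mul_nonneg (by linarith : (0:ℝ) ≤ 2 * m) hB0.le]
  rw [moeb, norm_div, div_le_div_iff₀ hB0 (by positivity : (0:ℝ) < 1 + m ^ 2)]
  linarith

lemma moeb_inv {p z : ℂ} (hp : ‖p‖ < 1) (hz : ‖z‖ < 1) :
    moeb (-p) (moeb p z) = z := by
  have hd1 : 1 - (starRingEnd ℂ) p * z ≠ 0 := moeb_denom_ne hp hz.le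
  have hd2 : 1 - (starRingEnd ℂ) (-p) * (moeb p z) ≠ 0 := by
    apply moeb_denom_ne (by simpa using hp) (moeb_lt_one hp hz).le
  have hpp : 1 - (starRingEnd ℂ) p * p ≠ 0 := by
    intro h
    have h1 : (starRingEnd ℂ) p * p = 1 := (sub_eq_zero.mp h).symm
    have h2 : ‖(starRingEnd ℂ) p * p‖ < 1 := by
      rw [norm_mul, Complex.norm_conj]; nlinarith [norm_nonneg p]
    rw [h1] at h2; simp at h2
  simp only [moeb, map_neg] at hd2 ⊢
  have hpp' : (1 : ℂ) - p * (starRingEnd ℂ) p ≠ 0 := by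
    rwa [mul_comm ((starRingEnd ℂ) p) p] at hpp
  field_simp at hd2 ⊢
  ring_nf
  rw [inv_eq_one_div, mul_one_div, mul_one_div, ← neg_div, ← add_div,
    div_eq_iff hpp']
  ring

lemma moeb_self (p : ℂ) : moeb p p = 0 := by simp [moeb]

lemma moeb_neg_zero {w : ℂ} : moeb (-w) 0 = w := by simp [moeb]

lemma moeb_diffOn {p : ℂ} (hp : ‖p‖ < 1) {s : Set ℂ}
    (hs : ∀ z ∈ s, ‖z‖ ≤ 1) : DifferentiableOn ℂ (moeb p) s := by
  apply DifferentiableOn.div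
  · exact (differentiable_id.sub_const p).differentiableOn
  · exact ((differentiable_const _).sub ((differentiable_const _).mul differentiable_id)).differentiableOn
  · exact fun z hz => moeb_denom_ne hp (hs z hz)

lemma dist_le_two_moeb {w z : ℂ} (hw : ‖w‖ < 1) (hz : ‖z‖ ≤ 1) :
    ‖z - w‖ ≤ 2 * ‖moeb w z‖ := by
  have hd : 1 - (starRingEnd ℂ) w * z ≠ 0 := moeb_denom_ne hw hz
  have h1 : z - w = moeb w z * (1 - (starRingEnd ℂ) w * z) := by
    rw [moeb, div_mul_cancel₀ _ hd]
  rw [h1, norm_mul]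
  have h2 : ‖1 - (starRingEnd ℂ) w * z‖ ≤ 2 := by
    calc ‖1 - (starRingEnd ℂ) w * z‖
        ≤ ‖(1:ℂ)‖ + ‖(starRingEnd ℂ) w * z‖ := by
          exact (norm_sub_le 1 _)
      _ ≤ 2 := by
          rw [norm_one, norm_mul, Complex.norm_conj]
          nlinarith [norm_nonneg w, norm_nonneg z]
  nlinarith [norm_nonneg (moeb w z)]

lemma pick_step {m : ℝ} (hm0 : 0 ≤ m) (hm : m < 1) {F : ℂ → ℂ}
    (hF : DifferentiableOn ℂ F (ball 0 1))
    (hmaps : Set.MapsTo F (ball 0 1) (closedBall 0 m))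
    {w z : ℂ} (hw : w ∈ ball (0:ℂ) 1) (hz : z ∈ ball (0:ℂ) 1) :
    ‖moeb (F w) (F z)‖
      ≤ (2 * m / (1 + m ^ 2) + 1) / 2 * ‖moeb w z‖ := by
  set m₂ := 2 * m / (1 + m ^ 2) with hm₂def
  set R := (m₂ + 1) / 2 with hRdef
  have hm₂0 : 0 ≤ m₂ := by positivity
  have hm₂1 : m₂ < 1 := by
    rw [hm₂def, div_lt_one (by positivity)]
    nlinarith
  have hR1 : R < 1 := by rw [hRdef]; linarith
  have hm₂R : m₂ < R := by rw [hRdef]; linarith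
  have habs : ∀ x : ℂ, x ∈ ball (0:ℂ) 1 ↔ ‖x‖ < 1 := by
    intro x; rw [mem_ball_zero_iff]
  have habs' : ∀ x : ℂ, x ∈ closedBall (0:ℂ) m ↔ ‖x‖ ≤ m := by
    intro x; rw [mem_closedBall_zero_iff]
  have hw1 : ‖w‖ < 1 := (habs w).mp hw
  have hz1 : ‖z‖ < 1 := (habs z).mp hz
  have hFw : ‖F w‖ ≤ m := (habs' _).mp (hmaps hw)
  have hFw1 : ‖F w‖ < 1 := lt_of_le_of_lt hFw hm
  set G := fun u => moeb (F w) (F (moeb (-w) u)) with hGdef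
  have hGd : DifferentiableOn ℂ G (ball 0 1) := by
    have h1 : DifferentiableOn ℂ (moeb (-w)) (ball 0 1) :=
      moeb_diffOn (by simpa using hw1) (fun x hx => ((habs x).mp hx).le)
    have hmt1 : Set.MapsTo (moeb (-w)) (ball (0:ℂ) 1) (ball (0:ℂ) 1) := by
      intro x hx
      exact (habs _).mpr (moeb_lt_one (by simpa using hw1) ((habs x).mp hx))
    have h3 : DifferentiableOn ℂ (moeb (F w)) (closedBall 0 m) :=
      moeb_diffOn hFw1 (fun x hx => le_trans ((habs' x).mp hx) hm.le)
    exact h3.comp (hF.comp h1 hmt1) (hmaps.comp hmt1)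
  have hG0 : G 0 = 0 := by
    rw [hGdef]; simp only [moeb_neg_zero, moeb_self]
  have hGmaps : Set.MapsTo G (ball 0 1) (ball (G 0) R) := by
    rw [hG0]
    intro u hu
    have h1 : moeb (-w) u ∈ ball (0:ℂ) 1 :=
      (habs _).mpr (moeb_lt_one (by simpa using hw1) ((habs u).mp hu))
    have h2 : ‖F (moeb (-w) u)‖ ≤ m := (habs' _).mp (hmaps h1)
    have h3 : ‖G u‖ ≤ m₂ := moeb_abs_le hm hFw h2
    exact mem_ball_zero_iff.mpr (by simpa using lt_of_le_of_lt h3 hm₂R)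
  have hkey := Complex.dist_le_div_mul_dist_of_mapsTo_ball hGd (hGmaps.mono_right ball_subset_closedBall)
      (z := moeb w z) ((habs _).mpr (moeb_lt_one hw1 hz1))
  rw [hG0] at hkey
  simp only [dist_zero_right] at hkey
  have hinv : moeb (-w) (moeb w z) = z := moeb_inv hw1 hz1
  have hGu : G (moeb w z) = moeb (F w) (F z) := by rw [hGdef]; simp only [hinv]
  rw [hGu] at hkey
  simpa [div_one] using hkey

lemma disk_fixed_point {m : ℝ} (hm0 : 0 ≤ m) (hm : m < 1) {F : ℂ → ℂ}
    (hF : DifferentiableOn ℂ F (ball 0 1))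
    (hmaps : Set.MapsTo F (ball 0 1) (closedBall 0 m)) :
    ∃ z ∈ ball (0:ℂ) 1, F z = z ∧ ∀ w ∈ ball (0:ℂ) 1, F w = w → w = z := by
  set R := (2 * m / (1 + m ^ 2) + 1) / 2 with hRdef
  have hm₂0 : 0 ≤ 2 * m / (1 + m ^ 2) := by positivity
  have hm₂1 : 2 * m / (1 + m ^ 2) < 1 := by
    rw [div_lt_one (by positivity)]; nlinarith
  have hR0 : 0 ≤ R := by rw [hRdef]; linarith
  have hR1 : R < 1 := by rw [hRdef]; linarith
  have hsub : closedBall (0:ℂ) m ⊆ ball (0:ℂ) 1 := by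
    intro x hx
    rw [mem_closedBall_zero_iff] at hx
    rw [mem_ball_zero_iff]
    exact lt_of_le_of_lt hx hm
  -- the iteration sequence
  set x : ℕ → ℂ := fun n => F^[n] 0 with hxdef
  have hx0 : x 0 = 0 := rfl
  have hxs : ∀ n, x (n + 1) = F (x n) := by
    intro n; rw [hxdef]; simp [Function.iterate_succ_apply']
  have hxball : ∀ n, x n ∈ ball (0:ℂ) 1 := by
    intro n
    induction n with
    | zero => rw [hx0]; exact mem_ball_self one_pos
    | succ k ih => rw [hxs k]; exact hsub (hmaps ih)
  have hrho : ∀ n, ‖moeb (x n) (x (n + 1))‖ ≤ R ^ n := by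
    intro n
    induction n with
    | zero =>
      rw [hx0]
      have h1 : moeb 0 (x 1) = x 1 := by simp [moeb]
      rw [h1, pow_zero]
      exact (mem_ball_zero_iff.mp (hxball 1)).le
    | succ k ih =>
      rw [hxs k, hxs (k + 1)]
      calc ‖moeb (F (x k)) (F (x (k + 1)))‖
          ≤ R * ‖moeb (x k) (x (k + 1))‖ :=
            pick_step hm0 hm hF hmaps (hxball k) (hxball (k + 1))
        _ ≤ R * R ^ k := by
            exact mul_le_mul_of_nonneg_left ih hR0
        _ = R ^ (k + 1) := by ring
  have hdist : ∀ n, dist (x n) (x (n + 1)) ≤ 2 * R ^ n := by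
    intro n
    have h1 : ‖x (n + 1) - x n‖ ≤ 2 * ‖moeb (x n) (x (n + 1))‖ :=
      dist_le_two_moeb (mem_ball_zero_iff.mp (hxball n)) (mem_ball_zero_iff.mp (hxball (n + 1))).le
    have h2 := hrho n
    rw [dist_eq_norm]
    have : ‖x n - x (n + 1)‖ = ‖x (n + 1) - x n‖ := by
      rw [← norm_neg]; simp
    rw [this]
    nlinarith
  have hcauchy : CauchySeq x := cauchySeq_of_le_geometric R 2 hR1 hdist
  obtain ⟨z, hz⟩ := cauchySeq_tendsto_of_complete hcauchy
  have hzcb : z ∈ closedBall (0:ℂ) m := by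
    apply isClosed_closedBall.mem_of_tendsto hz
    filter_upwards [Filter.eventually_ge_atTop 1] with n hn
    obtain ⟨k, rfl⟩ := Nat.exists_eq_add_of_le hn
    rw [add_comm, hxs k]
    exact hmaps (hxball k)
  have hzball : z ∈ ball (0:ℂ) 1 := hsub hzcb
  have hFz : F z = z := by
    have hc : ContinuousAt F z :=
      (hF.continuousOn.continuousAt (isOpen_ball.mem_nhds hzball))
    have h1 : Filter.Tendsto (fun n => F (x n)) Filter.atTop (nhds (F z)) :=
      hc.tendsto.comp hz
    have h2 : Filter.Tendsto (fun n => x (n + 1)) Filter.atTop (nhds z) :=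
      hz.comp (Filter.tendsto_add_atTop_nat 1)
    have h3 : (fun n => F (x n)) = fun n => x (n + 1) := by
      funext n; rw [hxs n]
    rw [h3] at h1
    exact tendsto_nhds_unique h1 h2
  refine ⟨z, hzball, hFz, ?_⟩
  intro w hwball hFw
  have h1 := pick_step hm0 hm hF hmaps hzball hwball
  rw [hFz, hFw] at h1
  have h2 : ‖moeb z w‖ = 0 := by
    nlinarith [norm_nonneg (moeb z w)]
  have h3 : moeb z w = 0 := by
    exact norm_eq_zero.mp h2
  rw [moeb, div_eq_zero_iff] at h3
  rcases h3 with h3 | h3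
  · exact sub_eq_zero.mp h3
  · exact absurd h3 (moeb_denom_ne (mem_ball_zero_iff.mp hzball) (mem_ball_zero_iff.mp hwball).le)

theorem stmt12 (M : ℝ) (hM : 1 < M) (c : ℂ) (D : Set ℂ) (hD : IsOpen D)
    (φ ψ : ℂ → ℂ) (hφ : DifferentiableOn ℂ φ D)
    (hbij : Set.BijOn φ D {u : ℂ | |(u - c).re| < M ∧ |(u - c).im| < M})
    (hψ : DifferentiableOn ℂ ψ {u : ℂ | |(u - c).re| < M ∧ |(u - c).im| < M})
    (hinv : ∀ z ∈ D, ψ (φ z) = z)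
    (g : ℂ → ℂ) (hg : DifferentiableOn ℂ g D)
    (hclose : ∀ z ∈ D, ‖g z - φ z‖ < 1) :
    ∃ U : Set ℂ, U ⊆ D ∧ IsOpen U ∧
      Set.BijOn g U {u : ℂ | |(u - c).re| < M - 1 ∧ |(u - c).im| < M - 1} := by
  set Q : Set ℂ := {u : ℂ | |(u - c).re| < M ∧ |(u - c).im| < M} with hQdef
  set Q' : Set ℂ := {u : ℂ | |(u - c).re| < M - 1 ∧ |(u - c).im| < M - 1} with hQ'def
  have hψD : ∀ w ∈ Q, ψ w ∈ D ∧ φ (ψ w) = w := by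
    intro w hw
    obtain ⟨z, hzD, hzw⟩ := hbij.surjOn hw
    have h1 : ψ w = z := by rw [← hzw, hinv z hzD]
    exact ⟨h1 ▸ hzD, by rw [h1, hzw]⟩
  set h : ℂ → ℂ := fun w => g (ψ w) with hhdef
  have hh : DifferentiableOn ℂ h Q := hg.comp hψ (fun w hw => (hψD w hw).1)
  have hgφ : ∀ z ∈ D, h (φ z) = g z := by
    intro z hz; rw [hhdef]; simp only []; rw [hinv z hz]
  have he : ∀ w ∈ Q, ‖h w - w‖ < 1 := by
    intro w hw
    have h1 := (hψD w hw).2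
    rw [hhdef]; simp only []
    calc ‖g (ψ w) - w‖ = ‖g (ψ w) - φ (ψ w)‖ := by rw [h1]
      _ < 1 := hclose (ψ w) (hψD w hw).1
  have hQ'sub : ∀ a ∈ Q', closedBall a 1 ⊆ Q := by
    intro a ha w hw
    rw [mem_closedBall, Complex.dist_eq] at hw
    obtain ⟨ha1, ha2⟩ := ha
    constructor
    · have h1 : (w - c).re = (w - a).re + (a - c).re := by
        simp [Complex.sub_re]
      rw [h1]
      have h2 : |(w - a).re| ≤ ‖w - a‖ := Complex.abs_re_le_norm _
      calc |(w - a).re + (a - c).re| ≤ |(w - a).re| + |(a - c).re| := abs_add_le _ _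
        _ < M := by linarith
    · have h1 : (w - c).im = (w - a).im + (a - c).im := by
        simp [Complex.sub_im]
      rw [h1]
      have h2 : |(w - a).im| ≤ ‖w - a‖ := Complex.abs_im_le_norm _
      calc |(w - a).im + (a - c).im| ≤ |(w - a).im| + |(a - c).im| := abs_add_le _ _
        _ < M := by linarith
  have key : ∀ a ∈ Q', ∃ w ∈ Q, h w = a ∧ ∀ w' ∈ Q, h w' = a → w' = w := by
    intro a ha
    have hcont : ContinuousOn (fun w => ‖h w - w‖) (closedBall a 1) :=
      (continuous_norm.comp_continuousOn
        (((hh.continuousOn.mono (hQ'sub a ha))).sub continuousOn_id))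
    obtain ⟨w₀, hw₀mem, hw₀max'⟩ := (isCompact_closedBall a 1).exists_isMaxOn
      ⟨a, mem_closedBall_self one_pos.le⟩ hcont
    have hw₀max := isMaxOn_iff.mp hw₀max'
    set m := ‖h w₀ - w₀‖ with hmdef
    have hm1 : m < 1 := he w₀ (hQ'sub a ha hw₀mem)
    have hm0 : 0 ≤ m := norm_nonneg _
    set F : ℂ → ℂ := fun u => -(h (a + u) - (a + u)) with hFdef
    have haffmaps : Set.MapsTo (fun u : ℂ => a + u) (ball 0 1) (closedBall a 1) := by
      intro u hu
      rw [mem_ball_zero_iff] at hu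
      rw [mem_closedBall, Complex.dist_eq]
      simpa using hu.le
    have hFd : DifferentiableOn ℂ F (ball 0 1) := by
      have h1 : DifferentiableOn ℂ (fun u : ℂ => a + u) (ball 0 1) :=
        ((differentiable_const a).add differentiable_id).differentiableOn
      have h2 : DifferentiableOn ℂ (fun u : ℂ => h (a + u)) (ball 0 1) :=
        hh.comp h1 (fun u hu => hQ'sub a ha (haffmaps hu))
      exact (h2.sub h1).neg
    have hFmaps : Set.MapsTo F (ball 0 1) (closedBall 0 m) := by
      intro u hu
      rw [mem_closedBall_zero_iff]
      have h1 := hw₀max (a + u) (haffmaps hu)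
      have h2 : ‖F u‖ = ‖h (a + u) - (a + u)‖ := by
        rw [hFdef]; simp only []; rw [norm_neg]
      rw [h2]
      exact h1
    obtain ⟨u₀, hu₀ball, hu₀fix, hu₀uniq⟩ := disk_fixed_point hm0 hm1 hFd hFmaps
    refine ⟨a + u₀, hQ'sub a ha (haffmaps hu₀ball), ?_, ?_⟩
    · have : -(h (a + u₀) - (a + u₀)) = u₀ := hu₀fix
      have := this
      linear_combination (norm := ring_nf) -this
    · intro w' hw'Q hw'a
      have h1 : ‖w' - a‖ < 1 := by
        have := he w' hw'Q
        rw [hw'a] at this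
        rw [← norm_neg]
        simpa [neg_sub] using this
      have h2 : w' - a ∈ ball (0:ℂ) 1 := mem_ball_zero_iff.mpr h1
      have h3 : F (w' - a) = w' - a := by
        rw [hFdef]; simp only []
        rw [add_sub_cancel]
        rw [hw'a]; ring
      have := hu₀uniq (w' - a) h2 h3
      linear_combination this
  have hQ'open : IsOpen Q' := by
    have h1 : Continuous fun u : ℂ => |(u - c).re| :=
      continuous_abs.comp (Complex.continuous_re.comp (continuous_id.sub continuous_const))
    have h2 : Continuous fun u : ℂ => |(u - c).im| :=
      continuous_abs.comp (Complex.continuous_im.comp (continuous_id.sub continuous_const))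
    exact (isOpen_lt h1 continuous_const).and (isOpen_lt h2 continuous_const)
  refine ⟨D ∩ g ⁻¹' Q', Set.inter_subset_left, ?_, ?_, ?_, ?_⟩
  · exact hg.continuousOn.isOpen_inter_preimage hD hQ'open
  · exact fun z hz => hz.2
  · intro z₁ hz₁ z₂ hz₂ hgz
    have ha : g z₁ ∈ Q' := hz₁.2
    obtain ⟨w, hwQ, hwa, huniq⟩ := key (g z₁) ha
    have hw₁ : φ z₁ ∈ Q := hbij.mapsTo hz₁.1
    have hw₂ : φ z₂ ∈ Q := hbij.mapsTo hz₂.1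
    have h1 : h (φ z₁) = g z₁ := hgφ z₁ hz₁.1
    have h2 : h (φ z₂) = g z₁ := by rw [hgφ z₂ hz₂.1, hgz]
    have e1 := huniq (φ z₁) hw₁ h1
    have e2 := huniq (φ z₂) hw₂ h2
    exact hbij.injOn hz₁.1 hz₂.1 (e1.trans e2.symm)
  · intro a ha
    obtain ⟨w, hwQ, hwa, _⟩ := key a ha
    have hz : ψ w ∈ D := (hψD w hwQ).1
    have hgz : g (ψ w) = a := hwa
    exact ⟨ψ w, ⟨hz, by rw [Set.mem_preimage, hgz]; exact ha⟩, hgz⟩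
end

section
/- Let P : ℂ → ℂ be a polynomial of degree d ≥ 2 and let ε ∈ (0,1). Then there exists R > 0 such that for every integer k ≥ 1 and every z ∈ ℂ satisfying |P^j(z)| ≥ R for all 0 ≤ j ≤ k − 1 (where P^j denotes the j-th iterate), one has |(P^k)'(z)| ≥ (1 − ε)^{k+1} · d^k · |P^k(z)| / |z|. -/
open Polynomial Finset

lemma evalBound (Q : Polynomial ℂ) (n : ℕ) (hQ : Q.natDegree ≤ n) :
    ∃ C : ℝ, 0 ≤ C ∧ ∀ w : ℂ, 1 ≤ ‖w‖ →
      ‖Q.eval w‖ ≤ C * ‖w‖ ^ n := by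
  refine ⟨∑ i ∈ Finset.range (n + 1), ‖Q.coeff i‖,
    Finset.sum_nonneg fun i _ => norm_nonneg _, fun w hw => ?_⟩
  rw [Polynomial.eval_eq_sum_range' (Nat.lt_succ_of_le hQ)]
  calc ‖∑ i ∈ Finset.range (n + 1), Q.coeff i * w ^ i‖
      ≤ ∑ i ∈ Finset.range (n + 1), ‖Q.coeff i * w ^ i‖ :=
        norm_sum_le _ _
    _ ≤ ∑ i ∈ Finset.range (n + 1), ‖Q.coeff i‖ * ‖w‖ ^ n := by
        refine Finset.sum_le_sum fun i hi => ?_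
        rw [norm_mul, norm_pow]
        exact mul_le_mul_of_nonneg_left
          (pow_le_pow_right₀ hw (Nat.lt_succ_iff.mp (Finset.mem_range.mp hi)))
          (norm_nonneg _)
    _ = _ := by rw [← Finset.sum_mul]

lemma keyBound (P : Polynomial ℂ) (hd : 2 ≤ P.natDegree)
    (ε : ℝ) (hε0 : 0 < ε) (hε1 : ε < 1) :
    ∃ R : ℝ, 1 ≤ R ∧ ∀ w : ℂ, R ≤ ‖w‖ →
      (1 - ε) * (P.natDegree : ℝ) * ‖P.eval w‖ ≤
        ‖w‖ * ‖(Polynomial.derivative P).eval w‖ := by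
  have hP0 : P ≠ 0 := fun h => by simp [h] at hd
  set d := P.natDegree with hdd
  have ha : 0 < ‖P.leadingCoeff‖ := by
    simpa using Polynomial.leadingCoeff_ne_zero.mpr hP0
  set a : ℝ := ‖P.leadingCoeff‖ with hadef
  set E1 : Polynomial ℂ := X * derivative P - C (d : ℂ) * P with hE1def
  have hE1 : E1.natDegree ≤ d - 1 := by
    refine Polynomial.natDegree_le_iff_coeff_eq_zero.mpr fun m hm => ?_
    have hdm : d ≤ m := by omega
    obtain ⟨n, rfl⟩ : ∃ n, m = n + 1 := ⟨m - 1, by omega⟩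
    simp only [hE1def, coeff_sub, coeff_X_mul, coeff_derivative, coeff_C_mul]
    rcases eq_or_lt_of_le hdm with h | h
    · have hc : ((n : ℂ) + 1) = (d : ℂ) := by rw [h]; push_cast; ring
      rw [← h, hc]; ring
    · rw [Polynomial.coeff_eq_zero_of_natDegree_lt (show P.natDegree < n + 1 by omega)]
      ring
  set E2 : Polynomial ℂ := P - C P.leadingCoeff * X ^ d with hE2def
  have hE2 : E2.natDegree ≤ d - 1 := by
    refine Polynomial.natDegree_le_iff_coeff_eq_zero.mpr fun m hm => ?_
    have hdm : d ≤ m := by omega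
    simp only [hE2def, coeff_sub, coeff_C_mul, coeff_X_pow]
    rcases eq_or_lt_of_le hdm with h | h
    · rw [← h, if_pos rfl, mul_one, hdd, Polynomial.coeff_natDegree, sub_self]
    · rw [Polynomial.coeff_eq_zero_of_natDegree_lt (show P.natDegree < m by omega),
        if_neg (by omega)]
      ring
  obtain ⟨C1, hC1, hC1bd⟩ := evalBound E1 (d - 1) hE1
  obtain ⟨C2, hC2, hC2bd⟩ := evalBound E2 (d - 1) hE2
  have hd0 : (0 : ℝ) < d := by positivity
  have hεd : 0 < ε * d := by positivity
  refine ⟨max 1 ((C1 / (ε * d) + C2) / a), le_max_left _ _, fun w hw => ?_⟩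
  have hw1 : 1 ≤ ‖w‖ := le_trans (le_max_left _ _) hw
  have hwa : C1 / (ε * d) + C2 ≤ a * ‖w‖ := by
    have h' : C1 / (ε * d) + C2 ≤ ‖w‖ * a :=
      (div_le_iff₀ ha).mp (le_trans (le_max_right _ _) hw)
    exact h'.trans_eq (mul_comm _ _)
  have hpow : ‖w‖ ^ d = ‖w‖ ^ (d - 1) * ‖w‖ := by
    rw [← pow_succ]; congr 1; omega
  have hpow0 : (0 : ℝ) < ‖w‖ ^ (d - 1) := by positivity
  have hPeval : P.eval w = P.leadingCoeff * w ^ d + E2.eval w := by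
    simp [hE2def]
  have hE2w : ‖E2.eval w‖ ≤ C2 * ‖w‖ ^ (d - 1) := hC2bd w hw1
  have hPw : ‖w‖ ^ (d - 1) * (a * ‖w‖ - C2) ≤ ‖P.eval w‖ := by
    have h1 : a * ‖w‖ ^ d - ‖E2.eval w‖ ≤ ‖P.eval w‖ := by
      have h2 : ‖P.leadingCoeff * w ^ d‖ ≤
          ‖P.eval w‖ + ‖E2.eval w‖ := by
        have h3 : P.leadingCoeff * w ^ d = P.eval w - E2.eval w := by
          rw [hPeval]; ring
        rw [h3]; exact norm_sub_le _ _
      rw [norm_mul, norm_pow, ← hadef] at h2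
      linarith
    nlinarith [hE2w]
  have hE1w : ‖E1.eval w‖ ≤ C1 * ‖w‖ ^ (d - 1) := hC1bd w hw1
  have hC1le : C1 ≤ ε * d * (a * ‖w‖ - C2) := by
    have h' : C1 / (ε * d) ≤ a * ‖w‖ - C2 := by linarith
    calc C1 = ε * d * (C1 / (ε * d)) := by field_simp
      _ ≤ _ := by nlinarith
  have hE1P : ‖E1.eval w‖ ≤ ε * d * ‖P.eval w‖ := by
    calc ‖E1.eval w‖ ≤ C1 * ‖w‖ ^ (d - 1) := hE1w
      _ ≤ ε * d * (a * ‖w‖ - C2) * ‖w‖ ^ (d - 1) := by nlinarith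
      _ ≤ ε * d * ‖P.eval w‖ := by nlinarith
  have hkey : (d : ℝ) * ‖P.eval w‖ ≤
      ‖w‖ * ‖(derivative P).eval w‖ + ‖E1.eval w‖ := by
    have heq : (d : ℂ) * P.eval w = w * (derivative P).eval w - E1.eval w := by
      simp only [hE1def, eval_sub, eval_mul, eval_X, eval_C]; ring
    have h3 : ‖(d : ℂ) * P.eval w‖ ≤
        ‖w * (derivative P).eval w‖ + ‖E1.eval w‖ := by
      rw [heq]; exact norm_sub_le _ _
    rwa [norm_mul, norm_mul, Complex.norm_natCast] at h3
  nlinarith [norm_nonneg (P.eval w)]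

theorem stmt13 (P : Polynomial ℂ) (hd : 2 ≤ P.natDegree)
    (ε : ℝ) (hε0 : 0 < ε) (hε1 : ε < 1) :
    ∃ R : ℝ, 0 < R ∧ ∀ k : ℕ, 1 ≤ k → ∀ z : ℂ,
      (∀ j : ℕ, j < k → R ≤ ‖(fun w => P.eval w)^[j] z‖) →
      (1 - ε) ^ (k + 1) * (P.natDegree : ℝ) ^ k *
          ‖(fun w => P.eval w)^[k] z‖ / ‖z‖
        ≤ ‖deriv ((fun w => P.eval w)^[k]) z‖ := by
  obtain ⟨R, hR1, hRbd⟩ := keyBound P hd ε hε0 hε1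
  set f : ℂ → ℂ := fun w => P.eval w with hfdef
  have hdiff : ∀ k : ℕ, Differentiable ℂ f^[k] := by
    intro k
    induction k with
    | zero => simpa using differentiable_id
    | succ k ih =>
      rw [Function.iterate_succ']
      exact P.differentiable.comp ih
  have hderiv : ∀ (k : ℕ) (z : ℂ), deriv f^[k + 1] z =
      (Polynomial.derivative P).eval (f^[k] z) * deriv f^[k] z := by
    intro k z
    rw [Function.iterate_succ',
      deriv_comp (x := z) P.differentiable.differentiableAt (hdiff k).differentiableAt]
    simp [hfdef, Polynomial.deriv]
  have hε' : (0 : ℝ) ≤ 1 - ε := by linarith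
  have claim : ∀ (k : ℕ) (z : ℂ), (∀ j : ℕ, j < k → R ≤ ‖f^[j] z‖) →
      (1 - ε) ^ k * (P.natDegree : ℝ) ^ k * ‖f^[k] z‖ ≤
        ‖deriv f^[k] z‖ * ‖z‖ := by
    intro k
    induction k with
    | zero => intro z _; simp
    | succ k ih =>
      intro z H
      have IH := ih z fun j hj => H j (by omega)
      have hw : R ≤ ‖f^[k] z‖ := H k (by omega)
      have hkey := hRbd (f^[k] z) hw
      have hfk : f^[k + 1] z = P.eval (f^[k] z) := Function.iterate_succ_apply' f k z
      have hnn : (0 : ℝ) ≤ (1 - ε) ^ k * (P.natDegree : ℝ) ^ k := by positivity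
      calc (1 - ε) ^ (k + 1) * (P.natDegree : ℝ) ^ (k + 1) * ‖f^[k + 1] z‖
          = (1 - ε) ^ k * (P.natDegree : ℝ) ^ k *
              ((1 - ε) * (P.natDegree : ℝ) * ‖P.eval (f^[k] z)‖) := by
            rw [hfk]; ring
        _ ≤ (1 - ε) ^ k * (P.natDegree : ℝ) ^ k *
              (‖f^[k] z‖ * ‖(Polynomial.derivative P).eval (f^[k] z)‖) :=
            mul_le_mul_of_nonneg_left hkey hnn
        _ = ‖(Polynomial.derivative P).eval (f^[k] z)‖ *
              ((1 - ε) ^ k * (P.natDegree : ℝ) ^ k * ‖f^[k] z‖) := by ring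
        _ ≤ ‖(Polynomial.derivative P).eval (f^[k] z)‖ *
              (‖deriv f^[k] z‖ * ‖z‖) :=
            mul_le_mul_of_nonneg_left IH (norm_nonneg _)
        _ = ‖deriv f^[k + 1] z‖ * ‖z‖ := by
            rw [hderiv k z, norm_mul]; ring
  refine ⟨R, by linarith, fun k hk z H => ?_⟩
  have hz : R ≤ ‖z‖ := by simpa using H 0 (by omega)
  have hz0 : 0 < ‖z‖ := by linarith
  rw [div_le_iff₀ hz0]
  have h1 : (1 - ε) ^ (k + 1) ≤ (1 - ε) ^ k :=
    pow_le_pow_of_le_one hε' (by linarith) (Nat.le_succ k)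
  calc (1 - ε) ^ (k + 1) * (P.natDegree : ℝ) ^ k * ‖f^[k] z‖
      ≤ (1 - ε) ^ k * (P.natDegree : ℝ) ^ k * ‖f^[k] z‖ := by
        have : (0 : ℝ) ≤ (P.natDegree : ℝ) ^ k * ‖f^[k] z‖ := by positivity
        nlinarith
    _ ≤ ‖deriv f^[k] z‖ * ‖z‖ := claim k z H
end

section
/- Let f : ℂ → ℂ be a nonconstant entire function with f(ξ₀) = ξ₀ and ρ := f'(ξ₀) satisfying |ρ| > 1, and let L : ℂ → ℂ be entire with L(0) = ξ₀ and L(ρ·z) = f(L(z)) for all z ∈ ℂ. Let r₀ > 0, let Δ₀ := D(0, |ρ|·r₀), let A₀ := { u ∈ ℂ : r₀ ≤ |u| < |ρ|·r₀ }, and let w ∈ ℂ with w ∉ L(Δ₀). Then: (i) every z ∈ ℂ with L(z) = w satisfies |z| ≥ |ρ|·r₀; (ii) for every integer n ≥ 1, the set { z : L(z) = w and |ρ|^n·r₀ ≤ |z| < |ρ|^{n+1}·r₀ } equals { ρ^n·u : u ∈ A₀ and f^n(L(u)) = w }, where f^n denotes the n-th iterate of f; (iii) for every z in this set, L'(z)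 = ρ^{−n} · L'(z/ρ^n) · (f^n)'(L(z/ρ^n)). -/
theorem stmt14 (f : ℂ → ℂ) (hf : Differentiable ℂ f) (hnc : ∀ c : ℂ, f ≠ fun _ => c)
    (ξ₀ : ℂ) (hfix : f ξ₀ = ξ₀) (ρ : ℂ) (hρ : ρ = deriv f ξ₀)
    (hrep : 1 < ‖ρ‖)
    (L : ℂ → ℂ) (hL : Differentiable ℂ L) (hL0 : L 0 = ξ₀)
    (hfun : ∀ z : ℂ, L (ρ * z) = f (L z))
    (r₀ : ℝ) (hr₀ : 0 < r₀) (w : ℂ)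
    (hw : w ∉ L '' Metric.ball 0 (‖ρ‖ * r₀)) :
    (∀ z : ℂ, L z = w → ‖ρ‖ * r₀ ≤ ‖z‖) ∧
    (∀ n : ℕ, 1 ≤ n →
      {z : ℂ | L z = w ∧ ‖ρ‖ ^ n * r₀ ≤ ‖z‖ ∧
          ‖z‖ < ‖ρ‖ ^ (n + 1) * r₀}
        = {z : ℂ | ∃ u : ℂ,
            (r₀ ≤ ‖u‖ ∧ ‖u‖ < ‖ρ‖ * r₀) ∧
            f^[n] (L u) = w ∧ z = ρ ^ n * u}) ∧
    (∀ n : ℕ, 1 ≤ n → ∀ z : ℂ, L z = w →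
      ‖ρ‖ ^ n * r₀ ≤ ‖z‖ →
      ‖z‖ < ‖ρ‖ ^ (n + 1) * r₀ →
      deriv L z = (ρ ^ n)⁻¹ * deriv L (z / ρ ^ n) * deriv (f^[n]) (L (z / ρ ^ n))) := by
  have hρ0 : ρ ≠ 0 := by
    intro h; rw [h] at hrep; simp at hrep; linarith
  have hρn0 : ∀ n : ℕ, (ρ : ℂ) ^ n ≠ 0 := fun n => pow_ne_zero n hρ0
  -- iterated functional equation
  have hiter : ∀ (n : ℕ) (z : ℂ), L (ρ ^ n * z) = f^[n] (L z) := by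
    intro n
    induction n with
    | zero => intro z; simp
    | succ n ih =>
      intro z
      have : ρ ^ (n + 1) * z = ρ * (ρ ^ n * z) := by ring
      rw [this, hfun, ih, Function.iterate_succ_apply', ]
  -- part (i)
  have part1 : ∀ z : ℂ, L z = w → ‖ρ‖ * r₀ ≤ ‖z‖ := by
    intro z hz
    by_contra h
    push_neg at h
    exact hw ⟨z, by simpa using h, hz⟩
  refine ⟨part1, ?_, ?_⟩
  · intro n hn
    ext z
    simp only [Set.mem_setOf_eq]
    constructor
    · rintro ⟨hzw, h1, h2⟩
      refine ⟨z / ρ ^ n, ⟨?_, ?_⟩, ?_, by field_simp⟩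
      · rw [norm_div, norm_pow]
        rw [le_div_iff₀ (by positivity)]
        linarith [h1]
      · rw [norm_div, norm_pow, div_lt_iff₀ (by positivity)]
        calc ‖z‖ < ‖ρ‖ ^ (n + 1) * r₀ := h2
          _ = ‖ρ‖ * r₀ * ‖ρ‖ ^ n := by ring
      · rw [← hiter]
        have : ρ ^ n * (z / ρ ^ n) = z := by field_simp
        rw [this, hzw]
    · rintro ⟨u, ⟨hu1, hu2⟩, huw, rfl⟩
      have habs : ‖ρ ^ n * u‖ = ‖ρ‖ ^ n * ‖u‖ := by
        rw [norm_mul, norm_pow]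
      refine ⟨by rw [hiter]; exact huw, ?_, ?_⟩
      · rw [habs]
        have := pow_pos (lt_trans one_pos hrep) n
        nlinarith
      · rw [habs]
        calc ‖ρ‖ ^ n * ‖u‖
            < ‖ρ‖ ^ n * (‖ρ‖ * r₀) := by
              apply mul_lt_mul_of_pos_left hu2 (pow_pos (lt_trans one_pos hrep) n)
          _ = ‖ρ‖ ^ (n + 1) * r₀ := by ring
  · intro n hn z hzw h1 h2
    set u := z / ρ ^ n with hu
    have hzu : z = ρ ^ n * u := by rw [hu]; field_simp
    have hfn : Differentiable ℂ (f^[n]) := hf.iterate n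
    -- derivative of z ↦ L (ρ^n * z) at u, two ways
    have hd1 : HasDerivAt (fun t : ℂ => L (ρ ^ n * t))
        (deriv L (ρ ^ n * u) * ρ ^ n) u := by
      have h0 : HasDerivAt (fun t : ℂ => ρ ^ n * t) (ρ ^ n) u := by
        simpa using (hasDerivAt_id u).const_mul (ρ ^ n)
      exact ((hL (ρ ^ n * u)).hasDerivAt).comp u h0
    have hd2 : HasDerivAt (fun t : ℂ => L (ρ ^ n * t))
        (deriv (f^[n]) (L u) * deriv L u) u := by
      have : (fun t : ℂ => L (ρ ^ n * t)) = fun t : ℂ => f^[n] (L t) := by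
        funext t; exact hiter n t
      rw [this]
      exact ((hfn (L u)).hasDerivAt).comp u ((hL u).hasDerivAt)
    have heq : deriv L (ρ ^ n * u) * ρ ^ n = deriv (f^[n]) (L u) * deriv L u :=
      hd1.unique hd2
    rw [hzu] at *
    field_simp at heq ⊢
    linear_combination heq
end

section
/- Let f : ℂ → ℂ be a nonconstant entire function, let ξ₀ ∈ ℂ satisfy f(ξ₀) = ξ₀, and set ρ := f'(ξ₀); assume |ρ| > 1. Then there exists an entire function L : ℂ → ℂ with L(0) = ξ₀, L'(0) = 1, and L(ρ·z) = f(L(z)) for all z ∈ ℂ (the normalised Poincaré function of f at ξ₀). -/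
open Filter Metric Set Function Topology

set_option maxHeartbeats 1000000 in
theorem stmt15 (f : ℂ → ℂ) (hf : Differentiable ℂ f) (hnc : ∀ c : ℂ, f ≠ fun _ => c)
    (ξ₀ : ℂ) (hfix : f ξ₀ = ξ₀) (hrep : 1 < ‖deriv f ξ₀‖) :
    ∃ L : ℂ → ℂ, Differentiable ℂ L ∧ L 0 = ξ₀ ∧ deriv L 0 = 1 ∧
      ∀ z : ℂ, L (deriv f ξ₀ * z) = f (L z) := by
  classical
  set ρ : ℂ := deriv f ξ₀ with hρdef
  set t : ℝ := ‖ρ‖ with htdef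
  have ht : 1 < t := by rwa [htdef]
  have ht0 : (0:ℝ) < t := lt_trans one_pos ht
  clear_value t
  have hρ0 : ρ ≠ 0 := by
    intro h
    rw [htdef, h, norm_zero] at ht0; exact lt_irrefl _ ht0
  set g : ℂ → ℂ := fun w => f (ξ₀ + w) - ξ₀ with hgdef
  have hgd : Differentiable ℂ g :=
    (hf.comp ((differentiable_const ξ₀).add differentiable_id)).sub_const ξ₀
  have hg0 : g 0 = 0 := by simp [hgdef, hfix]
  have hgρ : HasDerivAt g ρ 0 := by
    have h1 : HasDerivAt f ρ ((fun w : ℂ => ξ₀ + w) 0) := by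
      show HasDerivAt f ρ (ξ₀ + 0)
      rw [add_zero]
      exact (hf ξ₀).hasDerivAt
    have h2 : HasDerivAt (fun w : ℂ => ξ₀ + w) 1 0 := by
      simpa using (hasDerivAt_id (0:ℂ)).const_add ξ₀
    have h3 := (h1.comp 0 h2).sub_const ξ₀
    simpa [hgdef, Function.comp_def] using h3
  have hderivg0 : deriv g 0 = ρ := hgρ.deriv
  -- quadratic and derivative bounds
  obtain ⟨C, hC1, hquad, hder⟩ :
      ∃ C : ℝ, 1 ≤ C ∧ (∀ w : ℂ, ‖w‖ ≤ 1 → ‖g w - ρ * w‖ ≤ C * ‖w‖ ^ 2) ∧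
        (∀ w : ℂ, ‖w‖ ≤ 1 → ‖deriv g w‖ ≤ t + C * ‖w‖) := by
    have hgan : AnalyticOnNhd ℂ g univ := hgd.differentiableOn.analyticOnNhd isOpen_univ
    have hdg : Differentiable ℂ (deriv g) := by
      have h := hgan.deriv
      exact fun z => (h z (mem_univ z)).differentiableAt
    set q : ℂ → ℂ := dslope (dslope g 0) 0 with hqdef
    have hq : Differentiable ℂ q := by
      have h1 : DifferentiableOn ℂ (dslope g 0) univ :=
        (Complex.differentiableOn_dslope univ_mem).mpr hgd.differentiableOn
      have h2 : DifferentiableOn ℂ q univ :=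
        (Complex.differentiableOn_dslope univ_mem).mpr h1
      exact fun z => (h2 z (mem_univ z)).differentiableAt univ_mem
    set p : ℂ → ℂ := dslope (deriv g) 0 with hpdef
    have hp : Differentiable ℂ p := by
      have h2 : DifferentiableOn ℂ p univ :=
        (Complex.differentiableOn_dslope univ_mem).mpr hdg.differentiableOn
      exact fun z => (h2 z (mem_univ z)).differentiableAt univ_mem
    have heq : ∀ w : ℂ, g w - ρ * w = w^2 * q w := by
      intro w
      rcases eq_or_ne w 0 with rfl | hw
      · simp [hg0]
      · have h1 : dslope g 0 w = g w / w := by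
          rw [dslope_of_ne _ hw, slope_def_field]
          simp [hg0]
        have h2 : q w = (g w / w - ρ) / w := by
          rw [hqdef, dslope_of_ne _ hw, slope_def_field, dslope_same, hderivg0, h1]
          simp
        rw [h2]
        field_simp
    have heq2 : ∀ w : ℂ, deriv g w - ρ = w * p w := by
      intro w
      rcases eq_or_ne w 0 with rfl | hw
      · simp [hderivg0]
      · have h2 : p w = (deriv g w - ρ) / w := by
          rw [hpdef, dslope_of_ne _ hw, slope_def_field, hderivg0]
          simp
        rw [h2]
        field_simp
    obtain ⟨Cq, hCq⟩ := (isCompact_closedBall (0:ℂ) 1).exists_bound_of_continuousOn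
      hq.continuous.continuousOn
    obtain ⟨Cp, hCp⟩ := (isCompact_closedBall (0:ℂ) 1).exists_bound_of_continuousOn
      hp.continuous.continuousOn
    refine ⟨max (max Cq Cp) 1, le_max_right _ _, ?_, ?_⟩
    · intro w hw
      have hb := hCq w (mem_closedBall_zero_iff.mpr hw)
      have h1 : ‖g w - ρ * w‖ = ‖w‖^2 * ‖q w‖ := by
        rw [heq w, norm_mul, norm_pow]
      rw [h1]
      have h2 : ‖q w‖ ≤ max (max Cq Cp) 1 := le_trans hb (le_trans (le_max_left _ _) (le_max_left _ _))
      nlinarith [sq_nonneg ‖w‖, norm_nonneg (q w)]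
    · intro w hw
      have hb := hCp w (mem_closedBall_zero_iff.mpr hw)
      have h1 : ‖deriv g w‖ ≤ ‖ρ‖ + ‖deriv g w - ρ‖ := by
        have := norm_add_le ρ (deriv g w - ρ)
        simpa using this
      have h2 : ‖deriv g w - ρ‖ = ‖w‖ * ‖p w‖ := by rw [heq2 w, norm_mul]
      have h3 : ‖p w‖ ≤ max (max Cq Cp) 1 := le_trans hb (le_trans (le_max_right _ _) (le_max_left _ _))
      rw [h2] at h1
      have h4 : ‖w‖ * ‖p w‖ ≤ max (max Cq Cp) 1 * ‖w‖ := by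
        nlinarith [norm_nonneg w, norm_nonneg (p w)]
      rw [← htdef] at h1
      linarith
  have hC0 : (0:ℝ) < C := lt_of_lt_of_le one_pos hC1
  set δ : ℝ := min (1/2) (t*(t-1)/(4*C)) with hδdef
  have hδ0 : 0 < δ := by
    apply lt_min (by norm_num)
    apply div_pos (by nlinarith) (by positivity)
  have hδ1 : δ ≤ 1/2 := min_le_left _ _
  have hδ2 : 4*C*δ ≤ t*(t-1) := by
    have := min_le_right (1/2) (t*(t-1)/(4*C))
    rw [le_div_iff₀ (by positivity)] at this
    nlinarith
  clear_value δ
  set K : ℝ := t + 2*δ*C with hKdef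
  have hKt : t ≤ K := by nlinarith
  have hK0 : 0 < K := lt_of_lt_of_le ht0 hKt
  have hKlt : K < t^2 := by nlinarith
  have hLip : ∀ x y : ℂ, ‖x‖ ≤ 2*δ → ‖y‖ ≤ 2*δ → ‖g x - g y‖ ≤ K * ‖x - y‖ := by
    intro x y hx hy
    have hbound : ∀ w ∈ closedBall (0:ℂ) (2*δ), ‖deriv g w‖ ≤ K := by
      intro w hw
      have hw' : ‖w‖ ≤ 2*δ := mem_closedBall_zero_iff.mp hw
      have h1 := hder w (by linarith)
      rw [hKdef]
      nlinarith
    exact Convex.norm_image_sub_le_of_norm_deriv_le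
      (fun w _ => hgd w) hbound (convex_closedBall 0 (2*δ))
      (mem_closedBall_zero_iff.mpr hy) (mem_closedBall_zero_iff.mpr hx)
  clear_value K
  set F : ℕ → ℂ → ℂ := fun n z => g^[n] (z / ρ^n) with hFdef
  have horbit : ∀ n k, k ≤ n → ∀ z : ℂ, ‖z‖ ≤ δ →
      ‖g^[k] (z / ρ^n)‖ ≤ ‖z‖ * (t^k/t^n) * (1 + t^k/t^n) := by
    intro n k
    induction k with
    | zero =>
      intro _ z hz
      rw [Function.iterate_zero_apply, norm_div, norm_pow, ← htdef, pow_zero]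
      have h2 : (0:ℝ) ≤ ‖z‖ / t^n := by positivity
      have h3 : (0:ℝ) ≤ 1 / t^n := by positivity
      have h4 : ‖z‖ * (1/t^n) * (1 + 1/t^n) = ‖z‖/t^n + (‖z‖/t^n)*(1/t^n) := by
        field_simp
      rw [h4]
      nlinarith [mul_nonneg h2 h3]
    | succ k ih =>
      intro hk z hz
      have IH := ih (Nat.le_of_succ_le hk) z hz
      set u : ℝ := t^k / t^n with hudef
      have hu0 : 0 ≤ u := by positivity
      have htu : t^(k+1) ≤ t^n := pow_le_pow_right₀ (le_of_lt ht) hk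
      have hu1 : t * u ≤ 1 := by
        rw [hudef]
        rw [show t * (t^k / t^n) = t^(k+1) / t^n by rw [pow_succ]; ring]
        rw [div_le_one (by positivity)]
        exact htu
      have hu1' : u ≤ 1 := by
        nlinarith [mul_nonneg hu0 (by linarith : (0:ℝ) ≤ t - 1)]
      clear_value u
      set w : ℂ := g^[k] (z / ρ^n) with hwdef
      have hwsmall : ‖w‖ ≤ 1 := by
        have e0 : ‖z‖ * u ≤ δ * 1 := mul_le_mul hz hu1' hu0 (le_of_lt hδ0)
        have e1 : ‖z‖ * u * (1+u) ≤ δ * 1 * (1+1) :=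
          mul_le_mul e0 (by linarith) (by linarith) (by positivity)
        calc ‖w‖ ≤ ‖z‖ * u * (1+u) := IH
        _ ≤ δ * 1 * (1+1) := e1
        _ ≤ 1 := by linarith
      have hq := hquad w hwsmall
      have hnorm : ‖g w‖ ≤ t*‖w‖ + C*‖w‖^2 := by
        have h1 : ‖g w‖ ≤ ‖ρ * w‖ + ‖g w - ρ * w‖ := by
          calc ‖g w‖ = ‖ρ * w + (g w - ρ * w)‖ := by congr 1; ring
          _ ≤ ‖ρ * w‖ + ‖g w - ρ * w‖ := norm_add_le _ _
        rw [norm_mul, ← htdef] at h1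
        linarith
      rw [Function.iterate_succ_apply', ← hwdef]
      clear_value w
      rw [show t^(k+1)/t^n = t*u from by rw [hudef, pow_succ]; ring]
      have hCz : 4*C*‖z‖ ≤ t*(t-1) := by nlinarith [norm_nonneg z]
      have hB0 : (0:ℝ) ≤ ‖z‖*u*(1+u) := by positivity
      have h1 : t*‖w‖ ≤ t*(‖z‖*u*(1+u)) := by nlinarith
      have hww : ‖w‖ * ‖w‖ ≤ (‖z‖*u*(1+u)) * (‖z‖*u*(1+u)) :=
        mul_le_mul IH IH (norm_nonneg w) hB0
      have h2 : C*‖w‖^2 ≤ C*(‖z‖*u*(1+u))^2 := by nlinarith [hww]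
      have h3 : C*(‖z‖*u*(1+u))^2 ≤ t*(t-1)*‖z‖*u^2 := by
        have e1 : (1+u)^2 ≤ 4 := by nlinarith
        have e3 : ‖z‖ * u^2 * (1+u)^2 ≤ ‖z‖ * u^2 * 4 :=
          mul_le_mul_of_nonneg_left e1 (by positivity)
        have e4 : (C*‖z‖) * (‖z‖*u^2*(1+u)^2) ≤ (C*‖z‖) * (‖z‖*u^2*4) :=
          mul_le_mul_of_nonneg_left e3 (by positivity)
        have e5 : (C*‖z‖) * (‖z‖*u^2*4) ≤ (t*(t-1)/4) * (‖z‖*u^2*4) :=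
          mul_le_mul_of_nonneg_right (by linarith) (by positivity)
        calc C*(‖z‖*u*(1+u))^2 = (C*‖z‖) * (‖z‖*u^2*(1+u)^2) := by ring
        _ ≤ (C*‖z‖) * (‖z‖*u^2*4) := e4
        _ ≤ (t*(t-1)/4) * (‖z‖*u^2*4) := e5
        _ = t*(t-1)*‖z‖*u^2 := by ring
      nlinarith [norm_nonneg z]
  have horbit' : ∀ n k, k ≤ n → ∀ z : ℂ, ‖z‖ ≤ δ → ‖g^[k] (z / ρ^n)‖ ≤ 2*δ := by
    intro n k hk z hz
    have h := horbit n k hk z hz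
    have hq1 : t^k/t^n ≤ 1 := by
      rw [div_le_one (by positivity)]
      exact pow_le_pow_right₀ (le_of_lt ht) hk
    have hq0 : (0:ℝ) ≤ t^k/t^n := by positivity
    have e0 : ‖z‖ * (t^k/t^n) ≤ δ * 1 := mul_le_mul hz hq1 hq0 (le_of_lt hδ0)
    have e1 : ‖z‖ * (t^k/t^n) * (1 + t^k/t^n) ≤ δ * 1 * (1+1) :=
      mul_le_mul e0 (by linarith) (by linarith) (by positivity)
    linarith
  have hF2 : ∀ n, ∀ z : ℂ, ‖z‖ ≤ δ → ‖F n z‖ ≤ 2*‖z‖ := by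
    intro n z hz
    have h := horbit n n le_rfl z hz
    rw [div_self (by positivity : t^n ≠ 0)] at h
    calc ‖F n z‖ = ‖g^[n] (z / ρ^n)‖ := rfl
    _ ≤ ‖z‖ * 1 * (1 + 1) := h
    _ = 2*‖z‖ := by ring
  set c : ℝ := C*δ^2/t^2 with hcdef
  set r : ℝ := K/t^2 with hrdef
  have hr0 : 0 ≤ r := le_of_lt (by positivity)
  have hr1 : r < 1 := by
    rw [hrdef, div_lt_one (by positivity)]; exact hKlt
  have hc0 : 0 ≤ c := by positivity
  clear_value c r
  have hdiff : ∀ z : ℂ, ‖z‖ ≤ δ → ∀ n, dist (F n z) (F (n+1) z) ≤ c * r^n := by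
    intro z hz n
    have hzn1 : ‖z / ρ^(n+1)‖ ≤ δ := by
      rw [norm_div, norm_pow, ← htdef]
      have h1 : ‖z‖ / t^(n+1) ≤ ‖z‖ := by
        apply div_le_self (norm_nonneg z)
        exact one_le_pow₀ (le_of_lt ht)
      linarith
    set a : ℂ := g (z / ρ^(n+1)) with hadef
    set b : ℂ := z / ρ^n with hbdef
    have hab : b = ρ * (z / ρ^(n+1)) := by
      rw [hbdef, pow_succ]
      field_simp
    have habnorm : ‖a - b‖ ≤ C * (‖z‖/t^(n+1))^2 := by
      have h1 := hquad (z/ρ^(n+1)) (le_trans hzn1 (by linarith))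
      rw [hadef, hab]
      have h2 : ‖z / ρ^(n+1)‖ = ‖z‖/t^(n+1) := by rw [norm_div, norm_pow, ← htdef]
      rw [← h2]
      exact h1
    clear_value a b
    have hstep : ∀ k, k ≤ n → ‖g^[k] a - g^[k] b‖ ≤ K^k * ‖a - b‖ := by
      intro k
      induction k with
      | zero =>
        intro _
        simp
      | succ k ih =>
        intro hk
        have h1 : ‖g^[k] a‖ ≤ 2*δ := by
          have h := horbit' (n+1) (k+1) (by omega) z hz
          rw [Function.iterate_succ_apply, ← hadef] at h
          exact h
        have h2 : ‖g^[k] b‖ ≤ 2*δ := by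
          have h := horbit' n k (by omega) z hz
          rw [← hbdef] at h
          exact h
        rw [Function.iterate_succ_apply', Function.iterate_succ_apply']
        calc ‖g (g^[k] a) - g (g^[k] b)‖ ≤ K * ‖g^[k] a - g^[k] b‖ := hLip _ _ h1 h2
        _ ≤ K * (K^k * ‖a-b‖) := by
          apply mul_le_mul_of_nonneg_left (ih (by omega)) (le_of_lt hK0)
        _ = K^(k+1) * ‖a-b‖ := by ring
    have hFn1 : F (n+1) z = g^[n] a := by
      rw [hFdef]
      simp only
      rw [Function.iterate_succ_apply, ← hadef]
    have hKn0 : (0:ℝ) ≤ K^n := pow_nonneg (le_of_lt hK0) n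
    calc dist (F n z) (F (n+1) z) = ‖g^[n] a - g^[n] b‖ := by
          rw [dist_eq_norm, hFn1, norm_sub_rev, hbdef]
    _ ≤ K^n * ‖a - b‖ := hstep n le_rfl
    _ ≤ K^n * (C * (‖z‖/t^(n+1))^2) := mul_le_mul_of_nonneg_left habnorm hKn0
    _ ≤ c * r^n := by
        have htne : t ≠ 0 := ne_of_gt ht0
        have e1 : K^n * (C * (‖z‖/t^(n+1))^2) = C*‖z‖^2*K^n / (t^2*(t^2)^n) := by
          field_simp
          ring
        have e2 : c * r^n = C*δ^2*K^n / (t^2*(t^2)^n) := by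
          rw [hcdef, hrdef, div_pow]
          field_simp
        rw [e1, e2]
        apply div_le_div_of_nonneg_right ?_ (by positivity)
        have hz2 : ‖z‖^2 ≤ δ^2 := by nlinarith [norm_nonneg z]
        have h2 := mul_le_mul_of_nonneg_right hz2 hKn0
        have h3 := mul_le_mul_of_nonneg_left h2 (le_of_lt hC0)
        nlinarith [h3]
  set L₀ : ℂ → ℂ := fun z => limUnder atTop (fun n => F n z) with hL₀def
  have hptδ : ∀ z : ℂ, ‖z‖ ≤ δ → Tendsto (fun n => F n z) atTop (𝓝 (L₀ z)) := by
    intro z hz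
    exact (cauchySeq_of_le_geometric r c hr1 (hdiff z hz)).tendsto_limUnder
  have hUδ : TendstoUniformlyOn F L₀ atTop (closedBall 0 δ) := by
    rw [Metric.tendstoUniformlyOn_iff]
    intro ε hε
    have hlim : Tendsto (fun n => c * r^n / (1-r)) atTop (𝓝 0) := by
      have h1 := tendsto_pow_atTop_nhds_zero_of_lt_one hr0 hr1
      have h2 := (h1.const_mul c).div_const (1-r)
      simpa using h2
    filter_upwards [hlim.eventually (gt_mem_nhds hε)] with n hn z hz
    have hz' : ‖z‖ ≤ δ := mem_closedBall_zero_iff.mp hz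
    have h := dist_le_of_le_geometric_of_tendsto r c hr1 (hdiff z hz') (hptδ z hz') n
    rw [dist_comm]
    exact lt_of_le_of_lt h hn
  have hGcont : ∀ m : ℕ, Continuous (g^[m]) := fun m => (hgd.iterate m).continuous
  have hcompF : ∀ (m n : ℕ) (z : ℂ), g^[m] (F n (z / ρ^m)) = F (n + m) z := by
    intro m n z
    have h1 : z / ρ^m / ρ^n = z / ρ^(n+m) := by
      rw [div_div, ← pow_add, Nat.add_comm]
    calc g^[m] (F n (z/ρ^m)) = g^[m] (g^[n] (z/ρ^m/ρ^n)) := rfl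
    _ = g^[m+n] (z/ρ^m/ρ^n) := (Function.iterate_add_apply g m n _).symm
    _ = g^[n+m] (z/ρ^(n+m)) := by rw [h1, Nat.add_comm]
    _ = F (n+m) z := rfl
  have hm : ∀ z : ℂ, ∃ m : ℕ, ‖z‖ ≤ δ * t^m := by
    intro z
    obtain ⟨m, hm'⟩ := pow_unbounded_of_one_lt (‖z‖/δ) ht
    refine ⟨m, ?_⟩
    rw [div_lt_iff₀ hδ0] at hm'
    nlinarith
  have hpt : ∀ z : ℂ, Tendsto (fun n => F n z) atTop (𝓝 (L₀ z)) := by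
    intro z
    obtain ⟨m, hzm⟩ := hm z
    have hw : ‖z / ρ^m‖ ≤ δ := by
      rw [norm_div, norm_pow, ← htdef, div_le_iff₀ (by positivity)]
      linarith [hzm]
    have h1 : Tendsto (fun n => g^[m] (F n (z/ρ^m))) atTop (𝓝 (g^[m] (L₀ (z/ρ^m)))) :=
      ((hGcont m).tendsto _).comp (hptδ _ hw)
    rw [show (fun n => g^[m] (F n (z/ρ^m))) = fun n => F (n+m) z from
      funext fun n => hcompF m n z] at h1
    have h2 : Tendsto (fun n => F n z) atTop (𝓝 (g^[m] (L₀ (z/ρ^m)))) :=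
      (tendsto_add_atTop_iff_nat m).mp h1
    rwa [show L₀ z = g^[m] (L₀ (z/ρ^m)) from h2.limUnder_eq]
  have hcomp0 : ∀ (m : ℕ) (z : ℂ), L₀ z = g^[m] (L₀ (z / ρ^m)) := by
    intro m z
    have h1 : Tendsto (fun n => g^[m] (F n (z/ρ^m))) atTop (𝓝 (g^[m] (L₀ (z/ρ^m)))) :=
      ((hGcont m).tendsto _).comp (hpt _)
    rw [show (fun n => g^[m] (F n (z/ρ^m))) = fun n => F (n+m) z from
      funext fun n => hcompF m n z] at h1
    exact tendsto_nhds_unique (hpt z) ((tendsto_add_atTop_iff_nat m).mp h1)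
  have hL₀2 : ∀ w : ℂ, ‖w‖ ≤ δ → ‖L₀ w‖ ≤ 2*δ := by
    intro w hw
    have h1 : Tendsto (fun n => ‖F n w‖) atTop (𝓝 ‖L₀ w‖) := (hpt w).norm
    exact le_of_tendsto h1 (Eventually.of_forall fun n => le_trans (hF2 n w hw) (by linarith))
  have hloc : TendstoLocallyUniformly F L₀ atTop := by
    rw [tendstoLocallyUniformly_iff_forall_isCompact]
    intro Kc hKc
    obtain ⟨R, hR⟩ := hKc.isBounded.subset_closedBall 0
    obtain ⟨m, hRm⟩ : ∃ m : ℕ, R ≤ δ * t^m := by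
      obtain ⟨m, h'⟩ := pow_unbounded_of_one_lt (R/δ) ht
      refine ⟨m, ?_⟩
      rw [div_lt_iff₀ hδ0] at h'
      nlinarith
    have hsub : Kc ⊆ closedBall 0 (δ * t^m) := hR.trans (closedBall_subset_closedBall hRm)
    refine TendstoUniformlyOn.mono ?_ hsub
    rw [Metric.tendstoUniformlyOn_iff]
    intro ε hε
    obtain ⟨η, hη0, hηimp⟩ := uniformContinuousOn_iff.mp
      ((isCompact_closedBall (0:ℂ) (2*δ)).uniformContinuousOn_of_continuous
        (hGcont m).continuousOn) ε hε
    obtain ⟨N, hN⟩ := eventually_atTop.mp (Metric.tendstoUniformlyOn_iff.mp hUδ η hη0)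
    rw [eventually_atTop]
    refine ⟨N + m, fun n hn z hz => ?_⟩
    have hz' : ‖z‖ ≤ δ * t^m := mem_closedBall_zero_iff.mp hz
    have hw : ‖z / ρ^m‖ ≤ δ := by
      rw [norm_div, norm_pow, ← htdef, div_le_iff₀ (by positivity)]
      linarith
    have hnm : N ≤ n - m := by omega
    have hd1 : dist (L₀ (z/ρ^m)) (F (n-m) (z/ρ^m)) < η :=
      hN (n-m) hnm _ (mem_closedBall_zero_iff.mpr hw)
    have hx : L₀ (z/ρ^m) ∈ closedBall (0:ℂ) (2*δ) := mem_closedBall_zero_iff.mpr (hL₀2 _ hw)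
    have hy : F (n-m) (z/ρ^m) ∈ closedBall (0:ℂ) (2*δ) :=
      mem_closedBall_zero_iff.mpr (le_trans (hF2 _ _ hw) (by linarith))
    have hfin := hηimp _ hx _ hy hd1
    have e1 : g^[m] (L₀ (z/ρ^m)) = L₀ z := (hcomp0 m z).symm
    have e2 : g^[m] (F (n-m) (z/ρ^m)) = F n z := by
      rw [hcompF m (n-m) z]
      congr 1
      omega
    rw [e1, e2] at hfin
    exact hfin
  have hFdiffb : ∀ n, Differentiable ℂ (F n) :=
    fun n => (hgd.iterate n).comp (differentiable_id.div_const (ρ^n))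
  have hlocOn : TendstoLocallyUniformlyOn F L₀ atTop univ :=
    tendstoLocallyUniformlyOn_univ.mpr hloc
  have hL₀d : Differentiable ℂ L₀ := by
    rw [← differentiableOn_univ]
    exact hlocOn.differentiableOn
      (Eventually.of_forall fun n => (hFdiffb n).differentiableOn) isOpen_univ
  have hitd : ∀ n, HasDerivAt (g^[n]) (ρ^n) 0 := by
    intro n
    induction n with
    | zero =>
      rw [Function.iterate_zero, pow_zero]
      exact hasDerivAt_id 0
    | succ n ih =>
      have h1 : HasDerivAt (g^[n]) (ρ^n) (g 0) := by rwa [hg0]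
      have h2 := h1.comp 0 hgρ
      rw [Function.iterate_succ, pow_succ]
      exact h2
  have hFderiv0 : ∀ n, deriv (F n) 0 = 1 := by
    intro n
    have h1 : HasDerivAt (fun z : ℂ => z / ρ^n) (1/ρ^n) 0 := by
      simpa using (hasDerivAt_id (0:ℂ)).div_const (ρ^n)
    have h2 : HasDerivAt (g^[n]) (ρ^n) ((fun z : ℂ => z/ρ^n) 0) := by
      show HasDerivAt (g^[n]) (ρ^n) ((0:ℂ)/ρ^n)
      rw [zero_div]
      exact hitd n
    have h3 := h2.comp 0 h1
    have h4 : ρ^n * (1/ρ^n) = 1 := by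
      field_simp
    rw [h4] at h3
    have h5 : F n = g^[n] ∘ fun z : ℂ => z / ρ^n := rfl
    rw [h5]
    exact h3.deriv
  have hderivL₀ : deriv L₀ 0 = 1 := by
    have h := hlocOn.deriv (Eventually.of_forall fun n => (hFdiffb n).differentiableOn) isOpen_univ
    have htd := h.tendsto_at (mem_univ (0:ℂ))
    have : Tendsto (fun n => deriv (F n) 0) atTop (𝓝 (deriv L₀ 0)) := htd
    rw [show (fun n => deriv (F n) 0) = fun _ => (1:ℂ) from funext hFderiv0] at this
    exact tendsto_nhds_unique this tendsto_const_nhds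
  have hL₀0 : L₀ 0 = 0 := by
    have h0 : ∀ n, F n 0 = 0 := by
      intro n; simp only [hFdef, zero_div]; exact Function.iterate_fixed hg0 n
    have := hpt 0
    rw [show (fun n => F n 0) = fun _ => (0:ℂ) from funext h0] at this
    exact tendsto_nhds_unique this tendsto_const_nhds
  have hsemi : ∀ z : ℂ, L₀ (ρ * z) = g (L₀ z) := by
    intro z
    have hfe : ∀ n, F (n+1) (ρ*z) = g (F n z) := by
      intro n
      have h1 : (ρ*z) / ρ^(n+1) = z / ρ^n := by
        rw [pow_succ]
        field_simp
      calc F (n+1) (ρ*z) = g^[n+1] ((ρ*z)/ρ^(n+1)) := rfl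
      _ = g^[n+1] (z/ρ^n) := by rw [h1]
      _ = g (g^[n] (z/ρ^n)) := Function.iterate_succ_apply' g n _
      _ = g (F n z) := rfl
    have h1 : Tendsto (fun n => F (n+1) (ρ*z)) atTop (𝓝 (L₀ (ρ*z))) :=
      (tendsto_add_atTop_iff_nat 1).mpr (hpt (ρ*z))
    have h2 : Tendsto (fun n => g (F n z)) atTop (𝓝 (g (L₀ z))) :=
      (hgd.continuous.tendsto _).comp (hpt z)
    rw [show (fun n => F (n+1) (ρ*z)) = fun n => g (F n z) from funext hfe] at h1
    exact tendsto_nhds_unique h1 h2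
  refine ⟨fun z => ξ₀ + L₀ z, (differentiable_const ξ₀).add hL₀d, by simp [hL₀0], ?_, ?_⟩
  · rw [show deriv (fun z => ξ₀ + L₀ z) 0 = deriv L₀ 0 from deriv_const_add ξ₀]
    exact hderivL₀
  · intro z
    show ξ₀ + L₀ (ρ * z) = f (ξ₀ + L₀ z)
    rw [hsemi z]
    simp [hgdef]
end
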